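/- arXiv:2601.19229 — 6 statements merged into one kernel-verified Lean document; each statement's English description precedes it below -/
import Mathlib

section
/- For every x in the open Euclidean unit ball 𝔹ⁿ, the Berwald distance from the origin to x is d_B(0,x) = |x|/(1 − |x|). -/
open MeasureTheory Filter Metric
open scoped Classical
open scoped RealInnerProductSpace ENNReal Topology

noncomputable section

/-- Berwald's metric on the open Euclidean unit ball. -/
def berwald (n : ℕ) (x y : EuclideanSpace ℝ (Fin n)) : ℝ :=
  if y = 0 then 0
  else (Real.sqrt ((1 - ‖x‖ ^ 2) * ‖y‖ ^ 2 + ⟪x, y⟫ ^ 2) + ⟪x, y⟫) ^ 2 /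
      ((1 - ‖x‖ ^ 2) ^ 2 * Real.sqrt ((1 - ‖x‖ ^ 2) * ‖y‖ ^ 2 + ⟪x, y⟫ ^ 2))

/-- The Berwald distance: infimum of Berwald lengths of Lipschitz curves in the
open unit ball joining `x₁` to `x₂`. -/
def dB (n : ℕ) (x₁ x₂ : EuclideanSpace ℝ (Fin n)) : ℝ :=
  sInf { L : ℝ | ∃ ζ : ℝ → EuclideanSpace ℝ (Fin n),
    (∃ K : NNReal, LipschitzOnWith K ζ (Set.Icc 0 1)) ∧
    (∀ t ∈ Set.Icc (0:ℝ) 1, ‖ζ t‖ < 1) ∧ ζ 0 = x₁ ∧ ζ 1 = x₂ ∧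
    L = ∫ t in Set.Icc (0:ℝ) 1, berwald n (ζ t) (deriv ζ t) }

lemma berwald_nonneg (n : ℕ) (x y : EuclideanSpace ℝ (Fin n)) : 0 ≤ berwald n x y := by
  unfold berwald
  split
  · exact le_refl 0
  · exact div_nonneg (sq_nonneg _) (mul_nonneg (sq_nonneg _) (Real.sqrt_nonneg _))

lemma key_ineq (n : ℕ) (v y : EuclideanSpace ℝ (Fin n)) (hv1 : ‖v‖ < 1) (hv0 : v ≠ 0) :
    ⟪v, y⟫ / (‖v‖ * (1 - ‖v‖) ^ 2) ≤ berwald n v y := by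
  rcases eq_or_ne y 0 with rfl | hy
  · simp [berwald]
  set a := ‖v‖ with ha_def
  have ha : 0 < a := norm_pos_iff.mpr hv0
  set p := (⟪v, y⟫ : ℝ) with hp_def
  set s := Real.sqrt ((1 - a ^ 2) * ‖y‖ ^ 2 + p ^ 2) with hs_def
  have hyn : 0 < ‖y‖ := norm_pos_iff.mpr hy
  have ha2 : 0 < 1 - a ^ 2 := by nlinarith
  have harg : 0 < (1 - a ^ 2) * ‖y‖ ^ 2 + p ^ 2 := by positivity
  have hs : 0 < s := Real.sqrt_pos.mpr harg
  have hs2 : s ^ 2 = (1 - a ^ 2) * ‖y‖ ^ 2 + p ^ 2 := Real.sq_sqrt harg.le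
  have h1a : (0:ℝ) < 1 - a := by linarith
  have hden : (0:ℝ) < a * (1 - a) ^ 2 := mul_pos ha (pow_pos h1a 2)
  have hB : berwald n v y = (s + p) ^ 2 / ((1 - a ^ 2) ^ 2 * s) := by
    rw [berwald, if_neg hy]
  rw [hB]
  have hp2 : p ^ 2 ≤ a ^ 2 * ‖y‖ ^ 2 := by
    have := abs_real_inner_le_norm v y
    calc p ^ 2 = |p| ^ 2 := (sq_abs p).symm
      _ ≤ (a * ‖y‖) ^ 2 := by gcongr
      _ = a ^ 2 * ‖y‖ ^ 2 := by ring
  rcases le_or_gt p 0 with hp | hp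
  · have : p / (a * (1 - a) ^ 2) ≤ 0 := div_nonpos_iff.mpr (Or.inr ⟨hp, hden.le⟩)
    exact this.trans (div_nonneg (sq_nonneg _) (by positivity))
  · have hpa : p / a ≤ s := by
      rw [Real.le_sqrt (by positivity) harg.le]
      rw [div_pow, div_le_iff₀ (by positivity)]
      nlinarith [mul_le_mul_of_nonneg_left hp2 ha2.le]
    have h1 : p ≤ a * s := by
      rw [div_le_iff₀ ha] at hpa; linarith [hpa]
    have h2 : a * p ≤ s := by
      nlinarith [hpa, hp.le, ha, hv1]
    rw [div_le_div_iff₀ hden (by positivity)]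
    nlinarith [mul_nonneg (sub_nonneg.mpr h1) (sub_nonneg.mpr h2), sq_nonneg (1 - a)]

lemma berwald_le (n : ℕ) (v y : EuclideanSpace ℝ (Fin n)) {r c : ℝ}
    (hr1 : r < 1) (hv : ‖v‖ ≤ r) (hy : ‖y‖ ≤ c) :
    berwald n v y ≤ 4 * c / (1 - r ^ 2) ^ 2 := by
  have hr0 : 0 ≤ r := le_trans (norm_nonneg v) hv
  have hc0 : 0 ≤ c := le_trans (norm_nonneg y) hy
  have har : (0:ℝ) < 1 - r ^ 2 := by nlinarith
  rcases eq_or_ne y 0 with rfl | hy0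
  · rw [berwald, if_pos rfl]; positivity
  set a := ‖v‖ with ha_def
  set p := (⟪v, y⟫ : ℝ) with hp_def
  set s := Real.sqrt ((1 - a ^ 2) * ‖y‖ ^ 2 + p ^ 2) with hs_def
  have hyn : 0 < ‖y‖ := norm_pos_iff.mpr hy0
  have ha1 : a < 1 := lt_of_le_of_lt hv hr1
  have ha0 : 0 ≤ a := norm_nonneg v
  have ha2 : 0 < 1 - a ^ 2 := by nlinarith
  have harr : (1 - r ^ 2) ≤ (1 - a ^ 2) := by nlinarith
  have harg : 0 < (1 - a ^ 2) * ‖y‖ ^ 2 + p ^ 2 := by positivity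
  have hs : 0 < s := Real.sqrt_pos.mpr harg
  have hs2 : s ^ 2 = (1 - a ^ 2) * ‖y‖ ^ 2 + p ^ 2 := Real.sq_sqrt harg.le
  have hp2 : p ^ 2 ≤ a ^ 2 * ‖y‖ ^ 2 := by
    have := abs_real_inner_le_norm v y
    calc p ^ 2 = |p| ^ 2 := (sq_abs p).symm
      _ ≤ (a * ‖y‖) ^ 2 := by gcongr
      _ = a ^ 2 * ‖y‖ ^ 2 := by ring
  have hsc : s ≤ c := by
    have h1 : (1 - a ^ 2) * ‖y‖ ^ 2 + p ^ 2 ≤ c ^ 2 := by nlinarith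
    calc s ≤ Real.sqrt (c ^ 2) := Real.sqrt_le_sqrt h1
      _ = c := Real.sqrt_sq hc0
  have hps : |p| ≤ s := by
    rw [← Real.sqrt_sq_eq_abs, ← Real.sqrt_sq hs.le]
    exact Real.sqrt_le_sqrt (by nlinarith)
  have hB : berwald n v y = (s + p) ^ 2 / ((1 - a ^ 2) ^ 2 * s) := by
    rw [berwald, if_neg hy0]
  rw [hB]
  have hnum : (s + p) ^ 2 ≤ 4 * s ^ 2 := by
    have h1 := abs_le.mp hps
    nlinarith [h1.1, h1.2]
  calc (s + p) ^ 2 / ((1 - a ^ 2) ^ 2 * s) ≤ 4 * s ^ 2 / ((1 - a ^ 2) ^ 2 * s) := by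
        apply div_le_div_of_nonneg_right hnum (by positivity) |>.trans_eq rfl
    _ = 4 * s / (1 - a ^ 2) ^ 2 := by field_simp
    _ ≤ 4 * c / (1 - r ^ 2) ^ 2 := by gcongr

lemma slope_tendsto_aux (g : ℝ → ℝ) (t : ℝ) (d : ℝ) (hd : HasDerivAt g d t) :
    Filter.Tendsto (fun k : ℕ => (g (t + 1/((k:ℝ)+1)) - g t) * ((k:ℝ)+1)) atTop (𝓝 d) := by
  have hu : Filter.Tendsto (fun k : ℕ => t + 1/((k:ℝ)+1)) atTop (𝓝[≠] t) := by
    rw [tendsto_nhdsWithin_iff]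
    constructor
    · have := tendsto_one_div_add_atTop_nhds_zero_nat (𝕜 := ℝ)
      have h2 := Filter.Tendsto.add (tendsto_const_nhds (x := t)) this
      simpa using h2
    · filter_upwards with k
      have : (0:ℝ) < 1/((k:ℝ)+1) := by positivity
      simp only [Set.mem_compl_iff, Set.mem_singleton_iff]
      intro h
      nlinarith [congrArg (fun z => z - t) h]
  have hslope := (hasDerivAt_iff_tendsto_slope.mp hd).comp hu
  convert hslope using 2 with k
  simp only [Function.comp_apply]
  rw [slope_def_field]
  have hne : ((k:ℝ)+1) ≠ 0 := by positivity
  field_simp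
  ring

lemma lipschitz_sub_le_integral_deriv (g : ℝ → ℝ) (C : NNReal) (hg : LipschitzWith C g) :
    g 1 - g 0 ≤ ∫ t in Set.Icc (0:ℝ) 1, deriv g t := by
  have hcont : Continuous g := hg.continuous
  set F : ℕ → ℝ → ℝ := fun k t => (g (t + 1/((k:ℝ)+1)) - g t) * ((k:ℝ)+1) with hF
  have hmeas : ∀ k : ℕ, AEStronglyMeasurable (F k) (volume.restrict (Set.Icc (0:ℝ) 1)) := by
    intro k
    exact (((hcont.comp (continuous_id.add continuous_const)).sub hcont).mul
      continuous_const).aestronglyMeasurable.restrict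
  have hbound : ∀ k : ℕ, ∀ᵐ t ∂(volume.restrict (Set.Icc (0:ℝ) 1)), ‖F k t‖ ≤ (C:ℝ) := by
    intro k
    filter_upwards with t
    have h1 : |g (t + 1/((k:ℝ)+1)) - g t| ≤ (C:ℝ) * (1/((k:ℝ)+1)) := by
      have := hg.dist_le_mul (t + 1/((k:ℝ)+1)) t
      rw [Real.dist_eq, Real.dist_eq] at this
      have habs : |((k:ℝ)+1)⁻¹| = ((k:ℝ)+1)⁻¹ := abs_of_pos (by positivity)
      simpa [habs] using this
    have hk : (0:ℝ) < (k:ℝ)+1 := by positivity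
    rw [hF]
    simp only [Real.norm_eq_abs, abs_mul, abs_of_pos hk]
    calc |g (t + 1/((k:ℝ)+1)) - g t| * ((k:ℝ)+1)
        ≤ ((C:ℝ) * (1/((k:ℝ)+1))) * ((k:ℝ)+1) := by gcongr
      _ = (C:ℝ) := by field_simp
  have hlim : ∀ᵐ t ∂(volume.restrict (Set.Icc (0:ℝ) 1)),
      Filter.Tendsto (fun k => F k t) atTop (𝓝 (deriv g t)) := by
    refine ae_restrict_of_ae ?_
    filter_upwards [hg.ae_differentiableAt_real] with t ht
    exact slope_tendsto_aux g t (deriv g t) ht.hasDerivAt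
  have htend1 : Filter.Tendsto (fun k => ∫ t in Set.Icc (0:ℝ) 1, F k t) atTop
      (𝓝 (∫ t in Set.Icc (0:ℝ) 1, deriv g t)) := by
    refine tendsto_integral_of_dominated_convergence (fun _ => (C:ℝ)) hmeas ?_ hbound hlim
    exact integrableOn_const measure_Icc_lt_top.ne
  have hIcc : ∀ f : ℝ → ℝ, (∫ t in Set.Icc (0:ℝ) 1, f t) = ∫ t in (0:ℝ)..1, f t := by
    intro f
    rw [MeasureTheory.integral_Icc_eq_integral_Ioc, intervalIntegral.integral_of_le zero_le_one]
  have hIk : ∀ k : ℕ, ∫ t in Set.Icc (0:ℝ) 1, F k t =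
      (∫ u in (1:ℝ)..(1 + 1/((k:ℝ)+1)), g u) * ((k:ℝ)+1)
      - (∫ u in (0:ℝ)..(1/((k:ℝ)+1)), g u) * ((k:ℝ)+1) := by
    intro k
    set h : ℝ := 1/((k:ℝ)+1) with hh
    rw [hIcc]
    have hInt : ∀ a b : ℝ, IntervalIntegrable g volume a b := fun a b =>
      hcont.intervalIntegrable a b
    have hgh : ∀ a b : ℝ, IntervalIntegrable (fun t => g (t + h)) volume a b := fun a b =>
      (hcont.comp (continuous_id.add continuous_const)).intervalIntegrable a b
    have e1 : ∫ t in (0:ℝ)..1, F k t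
        = ((∫ t in (0:ℝ)..1, g (t + h)) - ∫ t in (0:ℝ)..1, g t) * ((k:ℝ)+1) := by
      rw [← intervalIntegral.integral_sub (hgh 0 1) (hInt 0 1),
        ← intervalIntegral.integral_mul_const]
    have e2 : (∫ t in (0:ℝ)..1, g (t + h)) = ∫ u in h..(1+h), g u := by
      rw [intervalIntegral.integral_comp_add_right (a := (0:ℝ)) (b := 1) g h, zero_add]
    have e3 : (∫ u in h..(1:ℝ), g u) + (∫ u in (1:ℝ)..(1+h), g u) = ∫ u in h..(1+h), g u :=
      intervalIntegral.integral_add_adjacent_intervals (hInt h 1) (hInt 1 (1+h))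
    have e4 : (∫ u in (0:ℝ)..h, g u) + (∫ u in h..(1:ℝ), g u) = ∫ u in (0:ℝ)..1, g u :=
      intervalIntegral.integral_add_adjacent_intervals (hInt 0 h) (hInt h 1)
    rw [e1, e2]
    nlinarith [e3, e4]
  have hT1 : Filter.Tendsto (fun k : ℕ => (∫ u in (1:ℝ)..(1 + 1/((k:ℝ)+1)), g u) * ((k:ℝ)+1))
      atTop (𝓝 (g 1)) := by
    have hG : HasDerivAt (fun u => ∫ x in (1:ℝ)..u, g x) (g 1) 1 :=
      intervalIntegral.integral_hasDerivAt_right (hcont.intervalIntegrable 1 1)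
        hcont.aestronglyMeasurable.stronglyMeasurableAtFilter hcont.continuousAt
    have := slope_tendsto_aux (fun u => ∫ x in (1:ℝ)..u, g x) 1 (g 1) hG
    simpa [intervalIntegral.integral_same] using this
  have hT0 : Filter.Tendsto (fun k : ℕ => (∫ u in (0:ℝ)..(1/((k:ℝ)+1)), g u) * ((k:ℝ)+1))
      atTop (𝓝 (g 0)) := by
    have hG : HasDerivAt (fun u => ∫ x in (0:ℝ)..u, g x) (g 0) 0 :=
      intervalIntegral.integral_hasDerivAt_right (hcont.intervalIntegrable 0 0)
        hcont.aestronglyMeasurable.stronglyMeasurableAtFilter hcont.continuousAt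
    have := slope_tendsto_aux (fun u => ∫ x in (0:ℝ)..u, g x) 0 (g 0) hG
    simpa [intervalIntegral.integral_same] using this
  have htend2 : Filter.Tendsto (fun k => ∫ t in Set.Icc (0:ℝ) 1, F k t) atTop
      (𝓝 (g 1 - g 0)) := by
    have := hT1.sub hT0
    refine this.congr fun k => (hIk k).symm
  have := tendsto_nhds_unique htend1 htend2
  linarith [this]

lemma berwald_line (n : ℕ) (x : EuclideanSpace ℝ (Fin n)) (hx : ‖x‖ < 1) (t : ℝ)
    (ht : t ∈ Set.Icc (0:ℝ) 1) :
    berwald n (t • x) x = ‖x‖ / (1 - t * ‖x‖) ^ 2 := by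
  rcases eq_or_ne x 0 with rfl | hx0
  · simp [berwald]
  have hb : 0 < ‖x‖ := norm_pos_iff.mpr hx0
  obtain ⟨ht0, ht1⟩ := ht
  rw [berwald, if_neg hx0]
  have h1 : ‖t • x‖ = t * ‖x‖ := by
    rw [norm_smul, Real.norm_eq_abs, abs_of_nonneg ht0]
  have h2 : ⟪t • x, x⟫ = t * ‖x‖ ^ 2 := by
    rw [real_inner_smul_left, real_inner_self_eq_norm_sq]
  rw [h1, h2]
  have h3 : (1 - (t * ‖x‖) ^ 2) * ‖x‖ ^ 2 + (t * ‖x‖ ^ 2) ^ 2 = (‖x‖) ^ 2 := by ring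
  rw [h3, Real.sqrt_sq hb.le]
  have htb : 0 < 1 - t * ‖x‖ := by nlinarith
  have htb2 : t * ‖x‖ < 1 := by nlinarith
  have htb0 : 0 ≤ t * ‖x‖ := by positivity
  have h4 : (0:ℝ) < 1 - (t*‖x‖)^2 := by nlinarith
  rw [div_eq_div_iff (mul_pos (pow_pos h4 2) hb).ne' (pow_pos htb 2).ne']
  ring

lemma line_integral (x : ℝ) (hx0 : 0 ≤ x) (hx : x < 1) :
    (∫ t in Set.Icc (0:ℝ) 1, x / (1 - t * x) ^ 2) = x / (1 - x) := by
  have hne : ∀ t ∈ Set.uIcc (0:ℝ) 1, 1 - t * x ≠ 0 := by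
    intro t ht
    rw [Set.uIcc_of_le zero_le_one] at ht
    nlinarith [ht.1, ht.2]
  have hderiv : ∀ t ∈ Set.uIcc (0:ℝ) 1,
      HasDerivAt (fun u => (1 - u * x)⁻¹) (x / (1 - t * x) ^ 2) t := by
    intro t ht
    have h1 : HasDerivAt (fun u : ℝ => 1 - u * x) (-x) t := by
      simpa using ((hasDerivAt_id t).mul_const x).const_sub 1
    have h2 := h1.inv (hne t ht)
    refine h2.congr_deriv ?_
    ring
  have hint : IntervalIntegrable (fun t => x / (1 - t * x) ^ 2) volume 0 1 := by
    apply ContinuousOn.intervalIntegrable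
    apply ContinuousOn.div continuousOn_const
    · exact ((continuous_const.sub (continuous_id.mul continuous_const)).pow 2).continuousOn
    · intro t ht
      exact pow_ne_zero 2 (hne t ht)
  rw [MeasureTheory.integral_Icc_eq_integral_Ioc, ← intervalIntegral.integral_of_le zero_le_one]
  rw [intervalIntegral.integral_eq_sub_of_hasDerivAt hderiv hint]
  have h1 : (0:ℝ) < 1 - x := by linarith
  field_simp
  ring

/-- For every `x` in the open unit ball, the Berwald distance from the origin to `x`
equals `‖x‖ / (1 - ‖x‖)`. -/
theorem berwald_dist_origin (n : ℕ) (hn : 2 ≤ n)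
    (x : EuclideanSpace ℝ (Fin n)) (hx : ‖x‖ < 1) :
    dB n 0 x = ‖x‖ / (1 - ‖x‖) := by
  have hb0 : (0:ℝ) ≤ ‖x‖ := norm_nonneg x
  have hb1 : (0:ℝ) < 1 - ‖x‖ := by linarith
  -- the straight line curve
  set ζ₀ : ℝ → EuclideanSpace ℝ (Fin n) := fun t => t • x with hζ₀
  have hζ₀lip : LipschitzWith ‖x‖₊ ζ₀ := by
    apply LipschitzWith.of_dist_le_mul
    intro s t
    rw [dist_eq_norm, dist_eq_norm]
    have : ζ₀ s - ζ₀ t = (s - t) • x := (sub_smul s t x).symm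
    rw [this, norm_smul, Real.norm_eq_abs, coe_nnnorm, mul_comm]
  have hζ₀d : ∀ t : ℝ, deriv ζ₀ t = x := by
    intro t
    have := ((hasDerivAt_id t).smul_const x).deriv
    simpa using this
  have hmem : (‖x‖ / (1 - ‖x‖)) ∈ { L : ℝ | ∃ ζ : ℝ → EuclideanSpace ℝ (Fin n),
      (∃ K : NNReal, LipschitzOnWith K ζ (Set.Icc 0 1)) ∧
      (∀ t ∈ Set.Icc (0:ℝ) 1, ‖ζ t‖ < 1) ∧ ζ 0 = 0 ∧ ζ 1 = x ∧
      L = ∫ t in Set.Icc (0:ℝ) 1, berwald n (ζ t) (deriv ζ t) } := by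
    refine ⟨ζ₀, ⟨‖x‖₊, hζ₀lip.lipschitzOnWith⟩, ?_, by simp [hζ₀], by simp [hζ₀], ?_⟩
    · intro t ht
      have : ‖ζ₀ t‖ = |t| * ‖x‖ := by rw [hζ₀, norm_smul, Real.norm_eq_abs]
      rw [this]
      have h1 : |t| ≤ 1 := abs_le.mpr ⟨by linarith [ht.1], ht.2⟩
      nlinarith [abs_nonneg t]
    · rw [show (∫ t in Set.Icc (0:ℝ) 1, berwald n (ζ₀ t) (deriv ζ₀ t))
          = ∫ t in Set.Icc (0:ℝ) 1, ‖x‖ / (1 - t * ‖x‖) ^ 2 from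
        setIntegral_congr_fun measurableSet_Icc fun t ht => by
          rw [hζ₀d t]; exact berwald_line n x hx t ht]
      exact (line_integral ‖x‖ hb0 hx).symm
  have hbdd : BddBelow { L : ℝ | ∃ ζ : ℝ → EuclideanSpace ℝ (Fin n),
      (∃ K : NNReal, LipschitzOnWith K ζ (Set.Icc 0 1)) ∧
      (∀ t ∈ Set.Icc (0:ℝ) 1, ‖ζ t‖ < 1) ∧ ζ 0 = 0 ∧ ζ 1 = x ∧
      L = ∫ t in Set.Icc (0:ℝ) 1, berwald n (ζ t) (deriv ζ t) } := by
    refine ⟨0, ?_⟩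
    rintro L ⟨ζ, _, _, _, _, rfl⟩
    exact MeasureTheory.setIntegral_nonneg measurableSet_Icc fun t _ => berwald_nonneg n _ _
  apply le_antisymm
  · exact csInf_le hbdd hmem
  · apply le_csInf ⟨_, hmem⟩
    rintro L ⟨ζ, ⟨K, hK⟩, hball, hz0, hz1, rfl⟩
    -- extend the curve by projection
    set ζt : ℝ → EuclideanSpace ℝ (Fin n) :=
      fun t => ζ (Set.projIcc (0:ℝ) 1 zero_le_one t) with hζt
    have hζlip : LipschitzWith K ζt := by
      intro s t
      have h1 := hK (Set.projIcc (0:ℝ) 1 zero_le_one s).2 (Set.projIcc (0:ℝ) 1 zero_le_one t).2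
      have h2 : edist ((Set.projIcc (0:ℝ) 1 zero_le_one s : ℝ))
          ((Set.projIcc (0:ℝ) 1 zero_le_one t : ℝ)) ≤ edist s t := by
        have h3 := LipschitzWith.projIcc (a := (0:ℝ)) (b := 1) zero_le_one s t
        simpa [Subtype.edist_eq] using h3
      exact h1.trans (mul_le_mul_right h2 K)
    have hagree : Set.EqOn ζt ζ (Set.Icc 0 1) := by
      intro t ht
      simp [hζt, Set.projIcc_of_mem zero_le_one ht]
    -- maximal norm
    obtain ⟨t₀, ht₀, hmax⟩ := isCompact_Icc.exists_isMaxOn (Set.nonempty_Icc.mpr zero_le_one)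
      ((hζlip.continuous.norm).continuousOn :
        ContinuousOn (fun t => ‖ζt t‖) (Set.Icc (0:ℝ) 1))
    set r := ‖ζt t₀‖ with hrdef
    have hr1 : r < 1 := by
      rw [hrdef, hagree ht₀]; exact hball t₀ ht₀
    have hr0 : 0 ≤ r := norm_nonneg _
    have hrb : ∀ t : ℝ, ‖ζt t‖ ≤ r := by
      intro t
      have hmemp := (Set.projIcc (0:ℝ) 1 zero_le_one t).2
      have h1 := hmax hmemp
      simpa [hζt, Set.projIcc_of_mem zero_le_one hmemp] using h1
    have hr' : (0:ℝ) < 1 - r := by linarith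
    -- the potential function
    set g : ℝ → ℝ := fun t => (1 - ‖ζt t‖)⁻¹ with hgdef
    set C : ℝ := K / (1 - r) ^ 2 with hCdef
    have hC0 : 0 ≤ C := by positivity
    have hgl : LipschitzWith C.toNNReal g := by
      apply LipschitzWith.of_dist_le_mul
      intro s t
      have hAs : 1 - r ≤ 1 - ‖ζt s‖ := by linarith [hrb s]
      have hAt : 1 - r ≤ 1 - ‖ζt t‖ := by linarith [hrb t]
      have hA0 : 0 < 1 - ‖ζt s‖ := lt_of_lt_of_le hr' hAs
      have hB0 : 0 < 1 - ‖ζt t‖ := lt_of_lt_of_le hr' hAt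
      rw [Real.dist_eq]
      rw [hgdef]
      simp only
      rw [inv_sub_inv hA0.ne' hB0.ne', abs_div]
      have hnum : |(1 - ‖ζt t‖) - (1 - ‖ζt s‖)| ≤ (K:ℝ) * dist s t := by
        have h1 : |‖ζt s‖ - ‖ζt t‖| ≤ ‖ζt s - ζt t‖ := abs_norm_sub_norm_le _ _
        have h2 : ‖ζt s - ζt t‖ ≤ (K:ℝ) * dist s t := by
          rw [← dist_eq_norm]; exact hζlip.dist_le_mul s t
        calc |(1 - ‖ζt t‖) - (1 - ‖ζt s‖)| = |‖ζt s‖ - ‖ζt t‖| := by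
              rw [show (1 - ‖ζt t‖) - (1 - ‖ζt s‖) = ‖ζt s‖ - ‖ζt t‖ from by ring]
          _ ≤ ‖ζt s - ζt t‖ := h1
          _ ≤ (K:ℝ) * dist s t := h2
      have hden : (1 - r) ^ 2 ≤ |(1 - ‖ζt s‖) * (1 - ‖ζt t‖)| := by
        rw [abs_of_pos (mul_pos hA0 hB0)]
        nlinarith
      calc |(1 - ‖ζt t‖) - (1 - ‖ζt s‖)| / |(1 - ‖ζt s‖) * (1 - ‖ζt t‖)|
          ≤ ((K:ℝ) * dist s t) / (1 - r) ^ 2 := by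
            apply div_le_div₀ (by positivity) hnum (by positivity) hden
        _ = C.toNNReal * dist s t := by
            rw [Real.coe_toNNReal _ hC0, hCdef]; ring
    have hgd : ∀ t : ℝ, |deriv g t| ≤ C := by
      intro t
      have := norm_deriv_le_of_lipschitz (f := g) (x₀ := t) hgl
      rw [Real.norm_eq_abs, Real.coe_toNNReal _ hC0] at this
      exact this
    have hζd : ∀ t : ℝ, ‖deriv ζt t‖ ≤ (K:ℝ) := fun t =>
      norm_deriv_le_of_lipschitz (f := ζt) (x₀ := t) hζlip
    -- measurability of the Berwald integrand
    have hmζ : Continuous ζt := hζlip.continuous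
    have hmd : Measurable (deriv ζt) := measurable_deriv ζt
    have hBmeas : Measurable (fun t => berwald n (ζt t) (deriv ζt t)) := by
      have m1 : Measurable fun t => ‖ζt t‖ := hmζ.norm.measurable
      have m2 : Measurable fun t => (⟪ζt t, deriv ζt t⟫ : ℝ) := hmζ.measurable.inner hmd
      have m3 : Measurable fun t => ‖deriv ζt t‖ := hmd.norm
      have m4 : Measurable fun t =>
          Real.sqrt ((1 - ‖ζt t‖ ^ 2) * ‖deriv ζt t‖ ^ 2 + (⟪ζt t, deriv ζt t⟫:ℝ) ^ 2) := by
        apply Real.continuous_sqrt.measurable.comp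
        exact (((measurable_const.sub (m1.pow_const 2)).mul (m3.pow_const 2)).add
          (m2.pow_const 2))
      simp only [berwald]
      refine Measurable.ite (hmd (measurableSet_singleton 0)) measurable_const ?_
      exact ((m4.add m2).pow_const 2).div
        (((measurable_const.sub (m1.pow_const 2)).pow_const 2).mul m4)
    have hBint : IntegrableOn (fun t => berwald n (ζt t) (deriv ζt t)) (Set.Icc (0:ℝ) 1) := by
      apply Integrable.mono' (g := fun _ => 4 * (K:ℝ) / (1 - r ^ 2) ^ 2)
      · exact integrableOn_const measure_Icc_lt_top.ne
      · exact hBmeas.aestronglyMeasurable.restrict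
      · filter_upwards with t
        rw [Real.norm_eq_abs, abs_of_nonneg (berwald_nonneg n _ _)]
        exact berwald_le n (ζt t) (deriv ζt t) hr1 (hrb t) (hζd t)
    have hgint : IntegrableOn (deriv g) (Set.Icc (0:ℝ) 1) := by
      apply Integrable.mono' (g := fun _ => C)
      · exact integrableOn_const measure_Icc_lt_top.ne
      · exact (measurable_deriv g).aestronglyMeasurable.restrict
      · filter_upwards with t
        rw [Real.norm_eq_abs]
        exact hgd t
    -- the a.e. pointwise inequality
    have h_ae_le : ∀ᵐ t : ℝ, deriv g t ≤ berwald n (ζt t) (deriv ζt t) := by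
      filter_upwards [hgl.ae_differentiableAt_real, hζlip.ae_differentiableAt_real]
        with t hgt hζdt
      rcases eq_or_ne (ζt t) 0 with h0' | h0'
      · have hmin : IsLocalMin g t := by
          refine Filter.Eventually.of_forall fun u => ?_
          have hgt1 : g t = 1 := by rw [hgdef]; simp [h0']
          rw [hgt1, hgdef]
          simp only
          have h1 : ‖ζt u‖ ≤ r := hrb u
          have h2 : 0 < 1 - ‖ζt u‖ := by linarith
          rw [le_inv_comm₀ one_pos h2]
          · linarith [norm_nonneg (ζt u)]
        rw [hmin.deriv_eq_zero]
        exact berwald_nonneg n _ _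
      · have hv1 : ‖ζt t‖ < 1 := lt_of_le_of_lt (hrb t) hr1
        have hy := hζdt.hasDerivAt
        have hinner : HasDerivAt (fun u => (⟪ζt u, ζt u⟫:ℝ))
            ((⟪ζt t, deriv ζt t⟫:ℝ) + ⟪deriv ζt t, ζt t⟫) t := HasDerivAt.inner ℝ hy hy
        have hne : (⟪ζt t, ζt t⟫:ℝ) ≠ 0 := by
          rw [real_inner_self_eq_norm_sq]
          exact (pow_pos (norm_pos_iff.mpr h0') 2).ne'
        have hsq := (Real.hasDerivAt_sqrt hne).comp t hinner
        have hsq' : HasDerivAt (fun u => ‖ζt u‖)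
            (1 / (2 * Real.sqrt (⟪ζt t, ζt t⟫:ℝ)) *
              ((⟪ζt t, deriv ζt t⟫:ℝ) + ⟪deriv ζt t, ζt t⟫)) t := by
          refine HasDerivAt.congr_of_eventuallyEq hsq ?_
          filter_upwards with u
          simp only [Function.comp_apply]
          rw [real_inner_self_eq_norm_sq, Real.sqrt_sq (norm_nonneg _)]
        have hnz : (1:ℝ) - ‖ζt t‖ ≠ 0 := by linarith
        have hD : HasDerivAt g
            ((⟪ζt t, deriv ζt t⟫:ℝ) / (‖ζt t‖ * (1 - ‖ζt t‖) ^ 2)) t := by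
          have h1 : HasDerivAt (fun u => 1 - ‖ζt u‖)
              (-(1 / (2 * Real.sqrt (⟪ζt t, ζt t⟫:ℝ)) *
                ((⟪ζt t, deriv ζt t⟫:ℝ) + ⟪deriv ζt t, ζt t⟫))) t := hsq'.const_sub 1
          have h2 := h1.inv hnz
          rw [hgdef]
          refine HasDerivAt.congr_deriv h2 ?_
          rw [real_inner_self_eq_norm_sq, Real.sqrt_sq (norm_nonneg _),
            real_inner_comm (deriv ζt t) (ζt t)]
          have hnv : ‖ζt t‖ ≠ 0 := norm_ne_zero_iff.mpr h0'
          field_simp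
          ring
        rw [hD.deriv]
        exact key_ineq n (ζt t) (deriv ζt t) hv1 h0'
    -- rewrite the integral in terms of ζt
    have step1 : (∫ t in Set.Icc (0:ℝ) 1, berwald n (ζ t) (deriv ζ t))
        = ∫ t in Set.Icc (0:ℝ) 1, berwald n (ζt t) (deriv ζt t) := by
      apply setIntegral_congr_ae measurableSet_Icc
      have h01 : ∀ᵐ t : ℝ ∂volume, t ∉ ({0, 1} : Set ℝ) := by
        have hz : volume ({0, 1} : Set ℝ) = 0 :=
          (Set.countable_insert.mpr (Set.countable_singleton 1)).measure_zero volume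
        exact measure_eq_zero_iff_ae_notMem.mp hz
      filter_upwards [h01] with t ht htIcc
      have htne : t ≠ 0 ∧ t ≠ 1 := by
        simpa [Set.mem_insert_iff, Set.mem_singleton_iff, not_or] using ht
      have htIoo : t ∈ Set.Ioo (0:ℝ) 1 :=
        ⟨lt_of_le_of_ne htIcc.1 (Ne.symm htne.1), lt_of_le_of_ne htIcc.2 htne.2⟩
      have hev : ζ =ᶠ[𝓝 t] ζt := by
        filter_upwards [Ioo_mem_nhds htIoo.1 htIoo.2] with u hu
        exact (hagree (Set.Ioo_subset_Icc_self hu)).symm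
      rw [← hagree htIcc, hev.deriv_eq]
    -- conclude
    have step2 : (∫ t in Set.Icc (0:ℝ) 1, deriv g t)
        ≤ ∫ t in Set.Icc (0:ℝ) 1, berwald n (ζt t) (deriv ζt t) :=
      integral_mono_ae hgint hBint (ae_restrict_of_ae h_ae_le)
    have step3 : g 1 - g 0 ≤ ∫ t in Set.Icc (0:ℝ) 1, deriv g t :=
      lipschitz_sub_le_integral_deriv g C.toNNReal hgl
    have hg1 : g 1 = (1 - ‖x‖)⁻¹ := by
      rw [hgdef]; simp only
      rw [hagree (Set.right_mem_Icc.mpr zero_le_one), hz1]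
    have hg0 : g 0 = 1 := by
      rw [hgdef]; simp only
      rw [hagree (Set.left_mem_Icc.mpr zero_le_one), hz0]
      simp
    have hfinal : ‖x‖ / (1 - ‖x‖) = g 1 - g 0 := by
      rw [hg1, hg0]
      field_simp
      ring
    rw [step1]
    calc ‖x‖ / (1 - ‖x‖) = g 1 - g 0 := hfinal
      _ ≤ ∫ t in Set.Icc (0:ℝ) 1, deriv g t := step3
      _ ≤ ∫ t in Set.Icc (0:ℝ) 1, berwald n (ζt t) (deriv ζt t) := step2
end
end

section
/- For every x in the open Euclidean unit ball 𝔹ⁿ, the pointwise reversibility of Berwald's metric is λ_B(x) := sup over y ∈ ℝⁿ∖{0} of B(x,−y)/B(x,y) = ((1+|x|)/(1−|x|))²; consequently the global reversibility sup over x ∈ 𝔹ⁿ of λ_B(x) is +∞. -/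
open MeasureTheory Filter Metric
open scoped Classical RealInnerProductSpace ENNReal Topology

noncomputable section

lemma berwald_ratio (n : ℕ) (x y : EuclideanSpace ℝ (Fin n)) (hx : ‖x‖ < 1) (hy : y ≠ 0) :
    berwald n x (-y) / berwald n x y =
      ((Real.sqrt ((1 - ‖x‖ ^ 2) * ‖y‖ ^ 2 + ⟪x, y⟫ ^ 2) - ⟪x, y⟫) /
        (Real.sqrt ((1 - ‖x‖ ^ 2) * ‖y‖ ^ 2 + ⟪x, y⟫ ^ 2) + ⟪x, y⟫)) ^ 2 := by
  set s := ⟪x, y⟫ with hs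
  set A := Real.sqrt ((1 - ‖x‖ ^ 2) * ‖y‖ ^ 2 + s ^ 2) with hA
  have hc : 0 < (1 - ‖x‖ ^ 2) * ‖y‖ ^ 2 := by
    have h1 : 0 < 1 - ‖x‖ ^ 2 := by nlinarith [norm_nonneg x]
    have h2 : 0 < ‖y‖ := norm_pos_iff.mpr hy
    positivity
  have hA2 : A ^ 2 = (1 - ‖x‖ ^ 2) * ‖y‖ ^ 2 + s ^ 2 := by
    rw [hA, Real.sq_sqrt]; nlinarith [sq_nonneg s]
  have hAnn : 0 ≤ A := Real.sqrt_nonneg _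
  have habs : |s| < A := by nlinarith [abs_nonneg s, sq_abs s]
  have hAp : 0 < A + s := by have := abs_lt.mp habs; linarith
  have hAm : 0 < A - s := by have := abs_lt.mp habs; linarith
  have hApos : 0 < A := by linarith
  have hD : 0 < (1 - ‖x‖ ^ 2) ^ 2 * A := by
    have h1 : 0 < 1 - ‖x‖ ^ 2 := by nlinarith [norm_nonneg x]
    positivity
  have hby : berwald n x y = (A + s) ^ 2 / ((1 - ‖x‖ ^ 2) ^ 2 * A) := by
    rw [berwald, if_neg hy]
  have hbny : berwald n x (-y) = (A - s) ^ 2 / ((1 - ‖x‖ ^ 2) ^ 2 * A) := by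
    rw [berwald, if_neg (neg_ne_zero.mpr hy), norm_neg, inner_neg_right, ← hs, neg_sq, ← hA]
    ring_nf
  rw [hby, hbny]
  field_simp
  have h1 : 0 < 1 - ‖x‖ ^ 2 := by nlinarith [norm_nonneg x]
  exact div_self h1.ne'

lemma berwald_ratio_le (n : ℕ) (x y : EuclideanSpace ℝ (Fin n)) (hx : ‖x‖ < 1) (hy : y ≠ 0) :
    berwald n x (-y) / berwald n x y ≤ ((1 + ‖x‖) / (1 - ‖x‖)) ^ 2 := by
  rw [berwald_ratio n x y hx hy]
  set s := ⟪x, y⟫ with hs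
  set A := Real.sqrt ((1 - ‖x‖ ^ 2) * ‖y‖ ^ 2 + s ^ 2) with hA
  set r := ‖x‖ with hr
  have hr0 : 0 ≤ r := norm_nonneg x
  have h1 : 0 < 1 - r ^ 2 := by nlinarith
  have hyn : 0 < ‖y‖ := norm_pos_iff.mpr hy
  have hc : 0 < (1 - r ^ 2) * ‖y‖ ^ 2 := by positivity
  have hA2 : A ^ 2 = (1 - r ^ 2) * ‖y‖ ^ 2 + s ^ 2 := by
    rw [hA, Real.sq_sqrt]; nlinarith [sq_nonneg s]
  have hAnn : 0 ≤ A := Real.sqrt_nonneg _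
  have habs : |s| < A := by nlinarith [abs_nonneg s, sq_abs s]
  have hAp : 0 < A + s := by have := abs_lt.mp habs; linarith
  have hAm : 0 < A - s := by have := abs_lt.mp habs; linarith
  -- Cauchy-Schwarz
  have hcs : s ^ 2 ≤ r ^ 2 * ‖y‖ ^ 2 := by
    have := abs_real_inner_le_norm x y
    nlinarith [abs_nonneg s, sq_abs s]
  -- key : -s ≤ r * A
  have hkey : -s ≤ r * A := by
    rcases le_or_gt 0 s with h | h
    · nlinarith
    · have h2 : (r * A) ^ 2 ≥ s ^ 2 := by nlinarith
      have h3 : 0 ≤ r * A := mul_nonneg hr0 hAnn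
      by_contra hcon
      push_neg at hcon
      have h4 := mul_self_lt_mul_self h3 hcon
      nlinarith
  have hstep : (A - s) / (A + s) ≤ (1 + r) / (1 - r) := by
    rw [div_le_div_iff₀ hAp (by linarith : (0:ℝ) < 1 - r)]
    nlinarith
  have hnn : 0 ≤ (A - s) / (A + s) := le_of_lt (div_pos hAm hAp)
  exact pow_le_pow_left₀ hnn hstep 2

lemma berwald_ratio_mem (n : ℕ) (hn : 2 ≤ n) (x : EuclideanSpace ℝ (Fin n)) (hx : ‖x‖ < 1) :
    ∃ y : EuclideanSpace ℝ (Fin n), y ≠ 0 ∧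
      ((1 + ‖x‖) / (1 - ‖x‖)) ^ 2 = berwald n x (-y) / berwald n x y := by
  rcases eq_or_ne x 0 with rfl | hx0
  · refine ⟨EuclideanSpace.single (⟨0, by omega⟩ : Fin n) (1 : ℝ), ?_, ?_⟩
    · intro h
      have := congrArg (fun v : EuclideanSpace ℝ (Fin n) => v (⟨0, by omega⟩ : Fin n)) h
      simp [EuclideanSpace.single_apply] at this
    · rw [berwald_ratio n _ _ (by simp [hx]) ?hne]
      case hne =>
        intro h
        have := congrArg (fun v : EuclideanSpace ℝ (Fin n) => v (⟨0, by omega⟩ : Fin n)) h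
        simp [EuclideanSpace.single_apply] at this
      simp
  · refine ⟨-x, neg_ne_zero.mpr hx0, ?_⟩
    rw [berwald_ratio n x (-x) hx (neg_ne_zero.mpr hx0)]
    set r := ‖x‖ with hr
    have hr0 : 0 < r := norm_pos_iff.mpr hx0
    have hinn : ⟪x, -x⟫ = -(r ^ 2) := by
      rw [inner_neg_right, real_inner_self_eq_norm_sq]
    have hnorm : ‖(-x : EuclideanSpace ℝ (Fin n))‖ = r := norm_neg x
    rw [hinn, hnorm]
    have hsq : Real.sqrt ((1 - r ^ 2) * r ^ 2 + (-(r ^ 2)) ^ 2) = r := by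
      rw [show (1 - r ^ 2) * r ^ 2 + (-(r ^ 2)) ^ 2 = r ^ 2 by ring, Real.sqrt_sq hr0.le]
    rw [hsq]
    rw [show r - -(r ^ 2) = r * (1 + r) by ring, show r + -(r ^ 2) = r * (1 - r) by ring,
      mul_div_mul_left _ _ (ne_of_gt hr0)]

/-- For every `x` in the open unit ball, the pointwise reversibility
`λ_B(x) = sup_{y ≠ 0} B(x,-y)/B(x,y)` equals `((1+‖x‖)/(1-‖x‖))²`; consequently the
reversibilities are unbounded over the ball (global reversibility `= +∞`). -/
theorem berwald_reversibility (n : ℕ) (hn : 2 ≤ n) :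
    (∀ x : EuclideanSpace ℝ (Fin n), ‖x‖ < 1 →
      IsLUB {t : ℝ | ∃ y : EuclideanSpace ℝ (Fin n), y ≠ 0 ∧
          t = berwald n x (-y) / berwald n x y}
        (((1 + ‖x‖) / (1 - ‖x‖)) ^ 2)) ∧
    ¬ BddAbove {t : ℝ | ∃ x : EuclideanSpace ℝ (Fin n), ‖x‖ < 1 ∧
        ∃ y : EuclideanSpace ℝ (Fin n), y ≠ 0 ∧ t = berwald n x (-y) / berwald n x y} := by
  constructor
  · intro x hx
    apply IsGreatest.isLUB
    constructor
    · obtain ⟨y, hy, h⟩ := berwald_ratio_mem n hn x hx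
      exact ⟨y, hy, h⟩
    · rintro t ⟨y, hy, rfl⟩
      exact berwald_ratio_le n x y hx hy
  · rintro ⟨M, hM⟩
    -- first, M ≥ 1 by considering x = 0 (ratio 1)
    have hM1 : (1 : ℝ) ≤ M := by
      obtain ⟨y, hy, h⟩ := berwald_ratio_mem n hn (0 : EuclideanSpace ℝ (Fin n)) (by simp)
      have : ((1 + ‖(0 : EuclideanSpace ℝ (Fin n))‖) / (1 - ‖(0 : EuclideanSpace ℝ (Fin n))‖)) ^ 2 ≤ M :=
        hM ⟨0, by simp, y, hy, h⟩
      simpa using this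
    set r : ℝ := 1 - 1 / (M + 1) with hrdef
    have hMpos : (0 : ℝ) < M + 1 := by linarith
    have hrlt : r < 1 := by
      have : 0 < 1 / (M + 1) := by positivity
      simp only [hrdef]; linarith
    have hr0 : 0 ≤ r := by
      have : 1 / (M + 1) ≤ 1 := by
        rw [div_le_one hMpos]; linarith
      simp only [hrdef]; linarith
    set x : EuclideanSpace ℝ (Fin n) := r • EuclideanSpace.single (⟨0, by omega⟩ : Fin n) (1 : ℝ)
      with hxdef
    have hxn : ‖x‖ = r := by
      rw [hxdef, norm_smul, EuclideanSpace.norm_single]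
      simp [abs_of_nonneg hr0]
    obtain ⟨y, hy, h⟩ := berwald_ratio_mem n hn x (by rw [hxn]; exact hrlt)
    have hmem : ((1 + ‖x‖) / (1 - ‖x‖)) ^ 2 ≤ M :=
      hM ⟨x, by rw [hxn]; exact hrlt, y, hy, h⟩
    rw [hxn] at hmem
    have h1r : 1 - r = 1 / (M + 1) := by simp [hrdef]
    have he : (1 + r) / (1 - r) = (1 + r) * (M + 1) := by
      rw [h1r]; field_simp
    have hgt : M < ((1 + r) / (1 - r)) ^ 2 := by
      rw [he]
      have h4 : M + 1 ≤ (1 + r) * (M + 1) :=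
        le_mul_of_one_le_left hMpos.le (by linarith)
      nlinarith
    linarith
end
end

section
/- For every x ∈ 𝔹ⁿ∖{0}, setting ξ_x = x/((1−|x|)²·|x|) ∈ ℝⁿ (which is the differential at x of the Berwald distance from the origin r(x) = |x|/(1−|x|)), one has B*(x, ξ_x) = sup over y ∈ ℝⁿ∖{0} of ⟨ξ_x, y⟩/B(x,y) = 1. -/
open MeasureTheory Filter Metric
open scoped Classical RealInnerProductSpace ENNReal Topology

noncomputable section

set_option maxHeartbeats 1000000 in
/-- For `x ≠ 0` in the open unit ball and `ξ_x = x/((1-‖x‖)²‖x‖)` (the differential at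
`x` of the Berwald distance from the origin), the co-metric value
`B*(x, ξ_x) = sup_{y ≠ 0} ⟨ξ_x, y⟩ / B(x,y)` equals `1`. -/
theorem berwald_costar_dr_eq_one (n : ℕ) (hn : 2 ≤ n)
    (x : EuclideanSpace ℝ (Fin n)) (hx : ‖x‖ < 1) (hx0 : x ≠ 0) :
    IsLUB {t : ℝ | ∃ y : EuclideanSpace ℝ (Fin n), y ≠ 0 ∧
        t = ⟪(1 / ((1 - ‖x‖) ^ 2 * ‖x‖)) • x, y⟫ / berwald n x y} 1 := by
  have hr0 : 0 < ‖x‖ := norm_pos_iff.mpr hx0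
  set r : ℝ := ‖x‖ with hr
  have h1r : 0 < 1 - r ^ 2 := by nlinarith
  have h1r' : 0 < 1 - r := by linarith
  constructor
  · rintro t ⟨y, hy, rfl⟩
    have hy2 : 0 < ‖y‖ := norm_pos_iff.mpr hy
    set s : ℝ := ⟪x, y⟫ with hs
    set A : ℝ := (1 - r ^ 2) * ‖y‖ ^ 2 + s ^ 2 with hA
    have hApos : 0 < A := by positivity
    set u : ℝ := Real.sqrt A with hu
    have hupos : 0 < u := Real.sqrt_pos.mpr hApos
    have hu2 : u ^ 2 = A := Real.sq_sqrt hApos.le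
    have hcs : |s| ≤ r * ‖y‖ := abs_real_inner_le_norm x y
    have hs2 : s ^ 2 ≤ r ^ 2 * ‖y‖ ^ 2 := by
      nlinarith [sq_abs s, abs_nonneg s, mul_nonneg hr0.le hy2.le]
    have hus : |s| ≤ u := by
      nlinarith [sq_abs s, abs_nonneg s, mul_pos h1r (pow_pos hy2 2)]
    have hups : 0 < u + s := by
      have := neg_abs_le s
      nlinarith [mul_pos h1r (pow_pos hy2 2)]
    have hru : s ≤ r * u := by
      have key : s ^ 2 ≤ (r * u) ^ 2 := by nlinarith [mul_nonneg h1r.le (sub_nonneg.mpr hs2)]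
      nlinarith [mul_pos hr0 hupos, le_abs_self s]
    have hurs : r * s ≤ u := by
      rcases le_or_gt s 0 with h | h
      · nlinarith
      · nlinarith [le_abs_self s]
    rw [real_inner_smul_left]
    show 1 / ((1 - r) ^ 2 * r) * s / berwald n x y ≤ 1
    rw [berwald, if_neg hy, ← hs, ← hr, ← hA, ← hu]
    rw [div_le_one (div_pos (by positivity) (mul_pos (pow_pos h1r 2) hupos))]
    rw [div_mul_eq_mul_div, one_mul,
      div_le_div_iff₀ (by positivity) (mul_pos (pow_pos h1r 2) hupos)]
    nlinarith [mul_nonneg (mul_nonneg (sq_nonneg (1 - r)) (sub_nonneg.mpr hru)) (sub_nonneg.mpr hurs), hupos, hups]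
  · intro b hb
    apply hb
    refine ⟨x, hx0, ?_⟩
    have hxx : ⟪x, x⟫ = r ^ 2 := real_inner_self_eq_norm_sq x
    rw [berwald, if_neg hx0, real_inner_smul_left, hxx, ← hr]
    have hAx : (1 - r ^ 2) * r ^ 2 + (r ^ 2) ^ 2 = r ^ 2 := by ring
    rw [hAx, Real.sqrt_sq hr0.le]
    clear_value r
    have h1 : (1 : ℝ) + r ≠ 0 := by positivity
    have h2 : (1 : ℝ) - r ≠ 0 := ne_of_gt h1r'
    have key : ∀ c : ℝ, 0 < c → c < 1 → (1:ℝ) = 1 / ((1 - c) ^ 2 * c) * c ^ 2 /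
        ((c + c ^ 2) ^ 2 / ((1 - c ^ 2) ^ 2 * c)) := by
      intro c hc hc1
      have h1 : (1 : ℝ) + c ≠ 0 := by positivity
      have h2 : (1 : ℝ) - c ≠ 0 := by linarith
      field_simp
      ring
    exact key r hr0 hx
end
end

section
/- For every x ∈ 𝔹ⁿ∖{0}, setting ξ_x = x/((1−|x|)²·|x|) ∈ ℝⁿ, one has B*(x, −ξ_x) = sup over y ∈ ℝⁿ∖{0} of ⟨−ξ_x, y⟩/B(x,y) = ((1+|x|)/(1−|x|))²; that is, the co-metric evaluated on the negative of the differential of the distance function r(x) = |x|/(1−|x|) equals the pointwise reversibility ((1+|x|)/(1−|x|))². -/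
open MeasureTheory Filter Metric
open scoped Classical RealInnerProductSpace ENNReal Topology

noncomputable section

lemma berwald_aux (r : ℝ) (h0 : 0 < r) (h1 : r < 1) :
    ((1 + r) / (1 - r)) ^ 2 =
      r ^ 2 / ((1 - r) ^ 2 * r) / ((r - r ^ 2) ^ 2 / ((1 - r ^ 2) ^ 2 * r)) := by
  have ha : (1 - r) ≠ 0 := by linarith
  have hb : (1 + r) ≠ 0 := by linarith
  have hc : r ≠ 0 := h0.ne'
  have hd : r - r ^ 2 ≠ 0 := by
    rw [show r - r ^ 2 = r * (1 - r) by ring]; exact (mul_pos h0 (by linarith)).ne'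
  have he : 1 - r ^ 2 ≠ 0 := by
    rw [show 1 - r ^ 2 = (1 - r) * (1 + r) by ring]; positivity
  field_simp
  ring

/-- For `x ≠ 0` in the open unit ball and `ξ_x = x/((1-‖x‖)²‖x‖)`, the co-metric
evaluated at `-ξ_x`, i.e. `sup_{y ≠ 0} ⟨-ξ_x, y⟩ / B(x,y)`, equals the pointwise
reversibility `((1+‖x‖)/(1-‖x‖))²`. -/
theorem berwald_costar_neg_dr (n : ℕ) (hn : 2 ≤ n)
    (x : EuclideanSpace ℝ (Fin n)) (hx : ‖x‖ < 1) (hx0 : x ≠ 0) :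
    IsLUB {t : ℝ | ∃ y : EuclideanSpace ℝ (Fin n), y ≠ 0 ∧
        t = ⟪-((1 / ((1 - ‖x‖) ^ 2 * ‖x‖)) • x), y⟫ / berwald n x y}
      (((1 + ‖x‖) / (1 - ‖x‖)) ^ 2) := by
  have hr0 : 0 < ‖x‖ := norm_pos_iff.mpr hx0
  have h1r : 0 < 1 - ‖x‖ := by linarith
  have h1r' : 0 < 1 + ‖x‖ := by linarith
  have h1r2 : 0 < 1 - ‖x‖ ^ 2 := by nlinarith
  constructor
  · rintro t ⟨y, hy, rfl⟩
    have hy0 : 0 < ‖y‖ := norm_pos_iff.mpr hy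
    set r := ‖x‖ with hrdef
    set s := ⟪x, y⟫ with hsdef
    have hcs : |s| ≤ r * ‖y‖ := abs_real_inner_le_norm x y
    have hApos : 0 < (1 - r ^ 2) * ‖y‖ ^ 2 + s ^ 2 := by positivity
    set u := Real.sqrt ((1 - r ^ 2) * ‖y‖ ^ 2 + s ^ 2) with hudef
    have hu : 0 < u := Real.sqrt_pos.mpr hApos
    have hu2 : u ^ 2 = (1 - r ^ 2) * ‖y‖ ^ 2 + s ^ 2 := Real.sq_sqrt hApos.le
    have hcs2 : s ^ 2 ≤ r ^ 2 * ‖y‖ ^ 2 := by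
      nlinarith [sq_abs s, abs_nonneg s, mul_nonneg hr0.le hy0.le]
    have hsu : |s| ≤ r * u := by
      have h1 : s ^ 2 ≤ (r * u) ^ 2 := by nlinarith
      have h2 := Real.sqrt_le_sqrt h1
      rwa [Real.sqrt_sq_eq_abs, Real.sqrt_sq (by positivity)] at h2
    have h1 : 0 ≤ r * u + s := by
      have := neg_abs_le s; linarith
    have h2 : 0 ≤ u + r * s := by
      have hb := abs_le.mp hsu
      nlinarith [hb.2]
    have husum : 0 < u + s := by
      have := neg_abs_le s
      nlinarith [abs_le.mp hsu]
    have hBval : berwald n x y = (u + s) ^ 2 / ((1 - r ^ 2) ^ 2 * u) := by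
      rw [berwald, if_neg hy]
    have hInner : ⟪-((1 / ((1 - r) ^ 2 * r)) • x), y⟫ = (-s) / ((1 - r) ^ 2 * r) := by
      rw [inner_neg_left, real_inner_smul_left, ← hsdef]
      ring
    rw [hInner, hBval]
    have hB : 0 < (u + s) ^ 2 / ((1 - r ^ 2) ^ 2 * u) :=
      div_pos (pow_pos husum 2) (by positivity)
    rw [div_le_iff₀ hB]
    have e2 : ((1 + r) / (1 - r)) ^ 2 * ((u + s) ^ 2 / ((1 - r ^ 2) ^ 2 * u)) =
        ((1 + r) ^ 2 * (u + s) ^ 2) / ((1 - r) ^ 2 * ((1 - r ^ 2) ^ 2 * u)) := by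
      field_simp
      try ring
    rw [e2, div_le_div_iff₀ (by positivity) (by positivity)]
    have hprod : 0 ≤ (1 - r) ^ 2 * (1 + r) ^ 2 * ((r * u + s) * (u + r * s)) := by
      have := mul_nonneg h1 h2
      positivity
    nlinarith [hprod]
  · intro b hb
    apply hb
    refine ⟨-x, neg_ne_zero.mpr hx0, ?_⟩
    set r := ‖x‖ with hrdef
    have hs : ⟪x, (-x : EuclideanSpace ℝ (Fin n))⟫ = -(r ^ 2) := by
      rw [inner_neg_right, real_inner_self_eq_norm_sq]
    have hnx : ‖(-x : EuclideanSpace ℝ (Fin n))‖ = r := norm_neg x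
    have hBval : berwald n x (-x) = (r - r ^ 2) ^ 2 / ((1 - r ^ 2) ^ 2 * r) := by
      rw [berwald, if_neg (neg_ne_zero.mpr hx0), hs, hnx]
      rw [show (1 - r ^ 2) * r ^ 2 + (-(r ^ 2)) ^ 2 = r ^ 2 by ring,
        Real.sqrt_sq hr0.le, show r + -(r ^ 2) = r - r ^ 2 by ring]
    have hInner : ⟪-((1 / ((1 - r) ^ 2 * r)) • x), (-x : EuclideanSpace ℝ (Fin n))⟫ =
        r ^ 2 / ((1 - r) ^ 2 * r) := by
      rw [inner_neg_left, inner_neg_right, neg_neg, real_inner_smul_left,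
        real_inner_self_eq_norm_sq]
      ring
    rw [hInner, hBval]
    exact berwald_aux r hr0 hx
end
end

section
/- For every x ∈ 𝔹ⁿ and every ξ ∈ ℝⁿ∖{0}, the value T = B*(x,ξ) of the co-metric satisfies the quartic equation 16|x|²(1−|x|²)²·[(1−|x|²)A + β²]·T⁴ + 8·[(10|x|²−1)(1−|x|²)Aβ + (9|x|²−1)β³]·T³ + [(1−20|x|²−8|x|⁴)A² + 6(6|x|²−5)Aβ² − 27β⁴]·T² + 12A²β·T − A³ = 0, where A = (1−|x|²)³·(|ξ|² − ⟨x,ξ⟩²) and β = (1−|x|²)²·⟨x,ξ⟩. -/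
open MeasureTheory Filter Metric
open scoped Classical RealInnerProductSpace ENNReal Topology

noncomputable section

/-- The co-metric of Berwald's metric: `B*(x,ξ) = sup_{y ≠ 0} ⟨ξ, y⟩ / B(x,y)`. -/
def berwaldCo (n : ℕ) (x ξ : EuclideanSpace ℝ (Fin n)) : ℝ :=
  ⨆ y : {y : EuclideanSpace ℝ (Fin n) // y ≠ 0},
    ⟪ξ, (y : EuclideanSpace ℝ (Fin n))⟫ / berwald n x (y : EuclideanSpace ℝ (Fin n))

namespace BerwaldAux

variable {n : ℕ}

lemma arg_pos {x : EuclideanSpace ℝ (Fin n)} (hx : ‖x‖ < 1)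
    {y : EuclideanSpace ℝ (Fin n)} (hy : y ≠ 0) :
    0 < (1 - ‖x‖ ^ 2) * ‖y‖ ^ 2 + ⟪x, y⟫ ^ 2 := by
  have h1 : 0 < 1 - ‖x‖ ^ 2 := by nlinarith [norm_nonneg x]
  have h2 : 0 < ‖y‖ := norm_pos_iff.mpr hy
  nlinarith [sq_nonneg ⟪x, y⟫, mul_pos h1 (pow_pos h2 2)]

lemma sqrt_add_pos {x : EuclideanSpace ℝ (Fin n)} (hx : ‖x‖ < 1)
    {y : EuclideanSpace ℝ (Fin n)} (hy : y ≠ 0) :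
    0 < Real.sqrt ((1 - ‖x‖ ^ 2) * ‖y‖ ^ 2 + ⟪x, y⟫ ^ 2) + ⟪x, y⟫ := by
  have h1 : 0 < 1 - ‖x‖ ^ 2 := by nlinarith [norm_nonneg x]
  have h2 : 0 < ‖y‖ := norm_pos_iff.mpr hy
  have habs : |⟪x, y⟫| < Real.sqrt ((1 - ‖x‖ ^ 2) * ‖y‖ ^ 2 + ⟪x, y⟫ ^ 2) := by
    rw [show |⟪x, y⟫| = Real.sqrt (⟪x, y⟫ ^ 2) by rw [Real.sqrt_sq_eq_abs]]
    apply Real.sqrt_lt_sqrt (sq_nonneg _)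
    nlinarith [mul_pos h1 (pow_pos h2 2)]
  have := neg_abs_le ⟪x, y⟫
  linarith

lemma berwald_pos {x : EuclideanSpace ℝ (Fin n)} (hx : ‖x‖ < 1)
    {y : EuclideanSpace ℝ (Fin n)} (hy : y ≠ 0) :
    0 < berwald n x y := by
  have h1 : 0 < 1 - ‖x‖ ^ 2 := by nlinarith [norm_nonneg x]
  rw [berwald, if_neg hy]
  exact div_pos (pow_pos (sqrt_add_pos hx hy) 2)
    (mul_pos (pow_pos h1 2) (Real.sqrt_pos.mpr (arg_pos hx hy)))

lemma berwald_smul {x : EuclideanSpace ℝ (Fin n)} (hx : ‖x‖ < 1)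
    {y : EuclideanSpace ℝ (Fin n)} (hy : y ≠ 0) {c : ℝ} (hc : 0 < c) :
    berwald n x (c • y) = c * berwald n x y := by
  have hcy : c • y ≠ 0 := smul_ne_zero (ne_of_gt hc) hy
  rw [berwald, berwald, if_neg hy, if_neg hcy]
  have hin : ⟪x, c • y⟫ = c * ⟪x, y⟫ := real_inner_smul_right x y c
  have hno : ‖c • y‖ = c * ‖y‖ := by
    rw [norm_smul, Real.norm_eq_abs, abs_of_pos hc]
  have harg : (1 - ‖x‖ ^ 2) * ‖c • y‖ ^ 2 + ⟪x, c • y⟫ ^ 2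
      = c ^ 2 * ((1 - ‖x‖ ^ 2) * ‖y‖ ^ 2 + ⟪x, y⟫ ^ 2) := by
    rw [hin, hno]; ring
  have hsq : Real.sqrt ((1 - ‖x‖ ^ 2) * ‖c • y‖ ^ 2 + ⟪x, c • y⟫ ^ 2)
      = c * Real.sqrt ((1 - ‖x‖ ^ 2) * ‖y‖ ^ 2 + ⟪x, y⟫ ^ 2) := by
    rw [harg, Real.sqrt_mul (sq_nonneg c), Real.sqrt_sq hc.le]
  rw [hsq, hin]
  set s := Real.sqrt ((1 - ‖x‖ ^ 2) * ‖y‖ ^ 2 + ⟪x, y⟫ ^ 2) with hs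
  have hspos : 0 < s := Real.sqrt_pos.mpr (arg_pos hx hy)
  have hd : (0:ℝ) < 1 - ‖x‖ ^ 2 := by nlinarith [norm_nonneg x]
  field_simp

lemma deriv_condition {x ξ y₀ : EuclideanSpace ℝ (Fin n)} (hx : ‖x‖ < 1)
    (hy₀ : ‖y₀‖ = 1)
    (hmax : ∀ y : EuclideanSpace ℝ (Fin n), y ≠ 0 →
      ⟪ξ, y⟫ / berwald n x y ≤ ⟪ξ, y₀⟫ / berwald n x y₀)
    (v : EuclideanSpace ℝ (Fin n)) :
    ⟪ξ, v⟫ * (Real.sqrt (1 - ‖x‖ ^ 2 + ⟪x, y₀⟫ ^ 2) + ⟪x, y₀⟫)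
        * Real.sqrt (1 - ‖x‖ ^ 2 + ⟪x, y₀⟫ ^ 2) ^ 2
      = ⟪ξ, y₀⟫ * ((Real.sqrt (1 - ‖x‖ ^ 2 + ⟪x, y₀⟫ ^ 2) - ⟪x, y₀⟫)
            * ((1 - ‖x‖ ^ 2) * ⟪y₀, v⟫ + ⟪x, y₀⟫ * ⟪x, v⟫)
          + 2 * ⟪x, v⟫ * Real.sqrt (1 - ‖x‖ ^ 2 + ⟪x, y₀⟫ ^ 2) ^ 2) := by
  by_cases hv : v = 0
  · simp [hv, inner_zero_right]
  have hd : (0:ℝ) < 1 - ‖x‖ ^ 2 := by nlinarith [norm_nonneg x]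
  have hy₀ne : y₀ ≠ 0 := by
    intro h; rw [h] at hy₀; simp at hy₀
  set a := ⟪x, v⟫ with ha
  set b := ⟪y₀, v⟫ with hb
  set cc := ⟪ξ, v⟫ with hcc
  set pp := ⟪x, y₀⟫ with hpp
  set qq := ⟪ξ, y₀⟫ with hqq
  set s := Real.sqrt (1 - ‖x‖ ^ 2 + pp ^ 2) with hsdef
  have hargpos : (0:ℝ) < 1 - ‖x‖ ^ 2 + pp ^ 2 := by nlinarith [sq_nonneg pp]
  have hs2 : s ^ 2 = 1 - ‖x‖ ^ 2 + pp ^ 2 := Real.sq_sqrt hargpos.le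
  have hspos : 0 < s := Real.sqrt_pos.mpr hargpos
  have hsppos : 0 < s + pp := by nlinarith [hs2, hspos, hd]
  -- the one-variable functions
  set pf : ℝ → ℝ := fun t => pp + a * t with hpf
  set Yf : ℝ → ℝ := fun t => 1 + (2 * b * t + ‖v‖ ^ 2 * t ^ 2) with hYf
  set af : ℝ → ℝ := fun t => (1 - ‖x‖ ^ 2) * Yf t + pf t ^ 2 with haf
  set sf : ℝ → ℝ := fun t => Real.sqrt (af t) with hsf
  set φ : ℝ → ℝ := fun t =>
    (qq + cc * t) / ((sf t + pf t) ^ 2 / ((1 - ‖x‖ ^ 2) ^ 2 * sf t)) with hφ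
  have hpf0 : pf 0 = pp := by simp [hpf]
  have hYf0 : Yf 0 = 1 := by simp [hYf]
  have haf0 : af 0 = 1 - ‖x‖ ^ 2 + pp ^ 2 := by simp [haf, hYf0, hpf0]
  have hsf0 : sf 0 = s := by rw [hsf]; simp only; rw [haf0]
  -- identification with berwald along the line
  have hinx : ∀ t : ℝ, ⟪x, y₀ + t • v⟫ = pf t := by
    intro t
    simp only [hpf]
    rw [inner_add_right, real_inner_smul_right]; ring
  have hinxi : ∀ t : ℝ, ⟪ξ, y₀ + t • v⟫ = qq + cc * t := by
    intro t
    rw [inner_add_right, real_inner_smul_right]; ring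
  have hnorm2 : ∀ t : ℝ, ‖y₀ + t • v‖ ^ 2 = Yf t := by
    intro t
    have h1 : ‖t • v‖ ^ 2 = ‖v‖ ^ 2 * t ^ 2 := by
      rw [norm_smul, Real.norm_eq_abs, mul_pow, sq_abs]; ring
    rw [norm_add_sq_real, hy₀, real_inner_smul_right, h1]
    simp only [hYf, hb]
    ring
  have hrepr : ∀ t : ℝ, y₀ + t • v ≠ 0 → φ t = ⟪ξ, y₀ + t • v⟫ / berwald n x (y₀ + t • v) := by
    intro t hyt
    rw [berwald, if_neg hyt, hinxi t, hinx t, hnorm2 t]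
  have hφ0 : φ 0 = qq / berwald n x y₀ := by
    have := hrepr 0 (by simpa using hy₀ne)
    simpa using this
  -- local maximality
  have hvn : 0 < ‖v‖ := norm_pos_iff.mpr hv
  have hloc : IsLocalMax φ 0 := by
    filter_upwards [Metric.ball_mem_nhds (0:ℝ) (inv_pos.mpr hvn)] with t ht
    have habs : |t| < ‖v‖⁻¹ := by
      rwa [Metric.mem_ball, Real.dist_eq, sub_zero] at ht
    have hyt : y₀ + t • v ≠ 0 := by
      intro h
      have h2 : y₀ = -(t • v) := add_eq_zero_iff_eq_neg.mp h
      have h3 : ‖y₀‖ = |t| * ‖v‖ := by rw [h2, norm_neg, norm_smul, Real.norm_eq_abs]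
      have h4 : |t| * ‖v‖ < 1 := by
        have := (mul_lt_mul_of_pos_right habs hvn)
        rwa [inv_mul_cancel₀ hvn.ne'] at this
      rw [hy₀] at h3; linarith [h3, h4]
    rw [hrepr t hyt, hφ0]
    exact hmax _ hyt
  -- differentiability
  have hdp : HasDerivAt pf a 0 := by
    have h := ((hasDerivAt_id (0:ℝ)).const_mul a).const_add pp
    simpa [hpf] using h
  have hdY : HasDerivAt Yf (2 * b) 0 := by
    have h1 : HasDerivAt (fun t : ℝ => 2 * b * t) (2 * b) 0 := by
      simpa using (hasDerivAt_id (0:ℝ)).const_mul (2 * b)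
    have h2 : HasDerivAt (fun t : ℝ => ‖v‖ ^ 2 * t ^ 2) 0 0 := by
      simpa using (hasDerivAt_pow 2 (0:ℝ)).const_mul (‖v‖ ^ 2)
    have h := (h1.add h2).const_add 1
    simpa [hYf] using h
  have haf0pos : 0 < af 0 := by rw [haf0]; exact hargpos
  have hdaf : HasDerivAt af ((1 - ‖x‖ ^ 2) * (2 * b) + 2 * pp * a) 0 := by
    have h := (hdY.const_mul (1 - ‖x‖ ^ 2)).add (hdp.pow 2)
    have h2 : (↑(2:ℕ) : ℝ) * pf 0 ^ (2 - 1) * a = 2 * pp * a := by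
      rw [hpf0]; norm_num
    rw [haf]
    rw [h2] at h
    exact h
  have hdsf : HasDerivAt sf (((1 - ‖x‖ ^ 2) * (2 * b) + 2 * pp * a) / (2 * s)) 0 := by
    have h := hdaf.sqrt haf0pos.ne'
    rw [hsf]
    convert h using 2
    rw [haf0]
  have hBpos : 0 < (sf 0 + pf 0) ^ 2 / ((1 - ‖x‖ ^ 2) ^ 2 * sf 0) := by
    rw [hsf0, hpf0]
    exact div_pos (pow_pos hsppos 2) (mul_pos (pow_pos hd 2) hspos)
  have hdden : HasDerivAt (fun t => (1 - ‖x‖ ^ 2) ^ 2 * sf t)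
      ((1 - ‖x‖ ^ 2) ^ 2 * (((1 - ‖x‖ ^ 2) * (2 * b) + 2 * pp * a) / (2 * s))) 0 :=
    hdsf.const_mul ((1 - ‖x‖ ^ 2) ^ 2)
  have hdnum : HasDerivAt (fun t => (sf t + pf t) ^ 2)
      (↑(2:ℕ) * (sf 0 + pf 0) ^ (2 - 1) * (((1 - ‖x‖ ^ 2) * (2 * b) + 2 * pp * a) / (2 * s) + a)) 0 :=
    (hdsf.add hdp).pow 2
  have hdenne : (1 - ‖x‖ ^ 2) ^ 2 * sf 0 ≠ 0 := by
    rw [hsf0]; positivity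
  have hdB : HasDerivAt (fun t => (sf t + pf t) ^ 2 / ((1 - ‖x‖ ^ 2) ^ 2 * sf t))
      ((↑(2:ℕ) * (sf 0 + pf 0) ^ (2 - 1) * (((1 - ‖x‖ ^ 2) * (2 * b) + 2 * pp * a) / (2 * s) + a)
          * ((1 - ‖x‖ ^ 2) ^ 2 * sf 0)
        - (sf 0 + pf 0) ^ 2
          * ((1 - ‖x‖ ^ 2) ^ 2 * (((1 - ‖x‖ ^ 2) * (2 * b) + 2 * pp * a) / (2 * s))))
        / ((1 - ‖x‖ ^ 2) ^ 2 * sf 0) ^ 2) 0 :=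
    hdnum.div hdden hdenne
  have hdN : HasDerivAt (fun t : ℝ => qq + cc * t) cc 0 := by
    simpa using ((hasDerivAt_id (0:ℝ)).const_mul cc).const_add qq
  have hdφ := hdN.div hdB hBpos.ne'
  have hzero := hloc.hasDerivAt_eq_zero hdφ
  rw [hsf0, hpf0] at hzero
  -- now hzero is a real equation; massage to the goal
  have hBne : (s + pp) ^ 2 / ((1 - ‖x‖ ^ 2) ^ 2 * s) ≠ 0 := by positivity
  rw [div_eq_zero_iff] at hzero
  rcases hzero with hzero | hzero
  · -- numerator zero
    have hsne : s ≠ 0 := hspos.ne'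
    have hdne : (1 - ‖x‖ ^ 2) ≠ 0 := hd.ne'
    have hspne : s + pp ≠ 0 := hsppos.ne'
    field_simp at hzero
    have hgoal : (cc * (s + pp) * s ^ 2
        - qq * ((s - pp) * ((1 - ‖x‖ ^ 2) * b + pp * a) + 2 * a * s ^ 2))
        * (2 * (1 - ‖x‖ ^ 2) ^ 4 * s * (s + pp)) = 0 := by
      linear_combination (2 * (1 - ‖x‖ ^ 2) ^ 4 * s) * hzero
    have h2 := (mul_eq_zero.mp hgoal).resolve_right (by positivity)
    linear_combination h2
  · exact absurd hzero (by positivity)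

end BerwaldAux

set_option maxHeartbeats 1000000 in
set_option maxRecDepth 8000 in
lemma key_quartic (s p T d P Q : ℝ)
    (h1 : P*(d^2*s^3) = T*(s+p)*(2*(1-d)*s^2+(s-p)*p))
    (h2 : Q*(d^2*s^4) = T*(2*P*s^3*(s+p)+T*(s+p)^2+d*p*P*s))
    (hs : s^2 = d+p^2) :
    (16*(1-d)*d^2*(d*(d^3*(Q-P^2)) + (d^2*P)^2)*T^4
      + 8*((10*(1-d)-1)*d*(d^3*(Q-P^2))*(d^2*P) + (9*(1-d)-1)*(d^2*P)^3)*T^3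
      + ((1-20*(1-d)-8*(1-d)^2)*(d^3*(Q-P^2))^2 + 6*(6*(1-d)-5)*(d^3*(Q-P^2))*(d^2*P)^2
          - 27*(d^2*P)^4)*T^2
      + 12*(d^3*(Q-P^2))^2*(d^2*P)*T - (d^3*(Q-P^2))^3) * (d^12 * s^18) = 0 := by
  linear_combination ((-1*p^9*T^5*d^12 - 3*p^11*T^5*d^11 - 3*p^13*T^5*d^10 - 1*p^15*T^5*d^9 + 6*s^2*p^7*T^5*d^12 - 1*s^2*p^7*T^5*d^13 + 21*s^2*p^9*T^5*d^11 - 12*s^2*p^9*T^5*d^12 + 24*s^2*p^11*T^5*d^10 - 21*s^2*p^11*T^5*d^11 + 9*s^2*p^13*T^5*d^9 - 10*s^2*p^13*T^5*d^10 + 1*s^3*p^6*T^4*d^14*P + 4*s^3*p^6*T^5*d^12 + 2*s^3*p^6*T^5*d^13 + 3*s^3*p^8*T^4*d^13*P + 12*s^3*p^8*T^5*d^11 + 6*s^3*p^8*T^5*d^12 + 3*s^3*p^10*T^4*d^12*P + 12*s^3*p^10*T^5*d^10 + 6*s^3*p^10*T^5*d^11 + 1*s^3*p^12*T^4*d^11*P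 + 4*s^3*p^12*T^5*d^9 + 2*s^3*p^12*T^5*d^10 - 9*s^4*p^5*T^5*d^12 + 6*s^4*p^5*T^5*d^13 - 1*s^4*p^5*T^5*d^14 - 45*s^4*p^7*T^5*d^11 + 66*s^4*p^7*T^5*d^12 - 15*s^4*p^7*T^5*d^13 - 66*s^4*p^9*T^5*d^10 + 132*s^4*p^9*T^5*d^11 - 54*s^4*p^9*T^5*d^12 - 30*s^4*p^11*T^5*d^9 + 72*s^4*p^11*T^5*d^10 - 40*s^4*p^11*T^5*d^11 - 3*s^5*p^4*T^4*d^14*P - 1*s^5*p^4*T^4*d^15*P - 12*s^5*p^4*T^5*d^12 - 4*s^5*p^4*T^5*d^13 - 2*s^5*p^4*T^5*d^14 - 12*s^5*p^6*T^4*d^13*P + 6*s^5*p^6*T^4*d^14*P - 48*s^5*p^6*T^5*d^11 + 12*s^5*p^6*T^5*d^13 - 15*s^5*p^8*T^4*d^12*P + 15*s^5*p^8*T^4*d^13*P - 60*s^5*p^8*T^5*d^10 + 12*s^5*p^8*T^5*d^11 + 30*s^5*p^8*T^5*d^12 - 6*s^5*p^10*T^4*d^11*P + 8*s^5*p^10*T^4*d^12*P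 - 24*s^5*p^10*T^5*d^9 + 8*s^5*p^10*T^5*d^10 + 16*s^5*p^10*T^5*d^11 - 1*s^6*p^3*T^3*d^16*P^2 - 2*s^6*p^3*T^4*d^14*P - 4*s^6*p^3*T^4*d^15*P - 4*s^6*p^3*T^5*d^12 - 13*s^6*p^3*T^5*d^13 - 4*s^6*p^3*T^5*d^14 - 3*s^6*p^5*T^3*d^15*P^2 - 6*s^6*p^5*T^4*d^13*P - 12*s^6*p^5*T^4*d^14*P + 15*s^6*p^5*T^5*d^11 - 93*s^6*p^5*T^5*d^12 + 21*s^6*p^5*T^5*d^13 + 2*s^6*p^5*T^5*d^14 - 3*s^6*p^7*T^3*d^14*P^2 - 6*s^6*p^7*T^4*d^12*P - 12*s^6*p^7*T^4*d^13*P + 60*s^6*p^7*T^5*d^10 - 240*s^6*p^7*T^5*d^11 + 240*s^6*p^7*T^5*d^12 - 80*s^6*p^7*T^5*d^13 - 1*s^6*p^9*T^3*d^13*P^2 - 2*s^6*p^9*T^4*d^11*P - 4*s^6*p^9*T^4*d^12*P + 42*s^6*p^9*T^5*d^9 - 169*s^6*p^9*T^5*d^10 + 242*s^6*p^9*T^5*d^11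 - 81*s^6*p^9*T^5*d^12 - 3*s^7*p^2*T^4*d^15*P - 6*s^7*p^2*T^5*d^13 - 6*s^7*p^2*T^5*d^14 + 9*s^7*p^4*T^4*d^13*P - 24*s^7*p^4*T^4*d^14*P + 3*s^7*p^4*T^4*d^15*P + 36*s^7*p^4*T^5*d^11 - 42*s^7*p^4*T^5*d^12 - 24*s^7*p^4*T^5*d^13 + 6*s^7*p^4*T^5*d^14 + 21*s^7*p^6*T^4*d^12*P - 57*s^7*p^6*T^4*d^13*P + 24*s^7*p^6*T^4*d^14*P + 84*s^7*p^6*T^5*d^10 - 96*s^7*p^6*T^5*d^11 - 66*s^7*p^6*T^5*d^12 + 48*s^7*p^6*T^5*d^13 + 12*s^7*p^8*T^4*d^11*P - 36*s^7*p^8*T^4*d^12*P + 24*s^7*p^8*T^4*d^13*P + 48*s^7*p^8*T^5*d^9 - 60*s^7*p^8*T^5*d^10 - 48*s^7*p^8*T^5*d^11 + 48*s^7*p^8*T^5*d^12 - 3*s^8*p*T^5*d^14 + 3*s^8*p^3*T^3*d^15*P^2 + 6*s^8*p^3*T^4*d^13*P + 12*s^8*p^3*T^4*d^14*P + 12*s^8*p^3*T^5*d^11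 - 15*s^8*p^3*T^5*d^12 + 39*s^8*p^3*T^5*d^13 - 12*s^8*p^3*T^5*d^14 + 6*s^8*p^5*T^3*d^14*P^2 - 9*s^8*p^5*T^3*d^15*P^2 + 12*s^8*p^5*T^4*d^12*P + 24*s^8*p^5*T^4*d^13*P - 36*s^8*p^5*T^4*d^14*P - 3*s^8*p^5*T^5*d^10 + 60*s^8*p^5*T^5*d^11 - 300*s^8*p^5*T^5*d^12 + 302*s^8*p^5*T^5*d^13 - 84*s^8*p^5*T^5*d^14 + 3*s^8*p^7*T^3*d^13*P^2 - 6*s^8*p^7*T^3*d^14*P^2 + 6*s^8*p^7*T^4*d^11*P + 12*s^8*p^7*T^4*d^12*P - 24*s^8*p^7*T^4*d^13*P - 21*s^8*p^7*T^5*d^9 + 121*s^8*p^7*T^5*d^10 - 516*s^8*p^7*T^5*d^11 + 413*s^8*p^7*T^5*d^12 - 86*s^8*p^7*T^5*d^13 + 3*s^9*p^2*T^2*d^17*P^3 + 18*s^9*p^2*T^3*d^16*P^2 - 9*s^9*p^2*T^4*d^14*P + 54*s^9*p^2*T^4*d^15*P - 8*s^9*p^2*T^4*d^16*P - 18*s^9*p^2*T^5*d^12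 + 30*s^9*p^2*T^5*d^13 + 44*s^9*p^2*T^5*d^14 - 16*s^9*p^2*T^5*d^15 + 3*s^9*p^4*T^2*d^16*P^3 + 18*s^9*p^4*T^3*d^15*P^2 - 9*s^9*p^4*T^4*d^12*P + 15*s^9*p^4*T^4*d^13*P - 30*s^9*p^4*T^4*d^14*P + 32*s^9*p^4*T^4*d^15*P - 36*s^9*p^4*T^5*d^10 + 24*s^9*p^4*T^5*d^11 + 78*s^9*p^4*T^5*d^12 - 116*s^9*p^4*T^5*d^13 + 64*s^9*p^4*T^5*d^14 + 1*s^9*p^6*T^2*d^15*P^3 + 6*s^9*p^6*T^3*d^14*P^2 - 10*s^9*p^6*T^4*d^11*P + 33*s^9*p^6*T^4*d^12*P - 90*s^9*p^6*T^4*d^13*P + 33*s^9*p^6*T^4*d^14*P - 40*s^9*p^6*T^5*d^9 + 58*s^9*p^6*T^5*d^10 + 66*s^9*p^6*T^5*d^11 - 174*s^9*p^6*T^5*d^12 + 66*s^9*p^6*T^5*d^13 + 6*s^10*p*T^3*d^16*P^2 + 24*s^10*p*T^4*d^15*P - 27*s^10*p*T^5*d^13 + 66*s^10*p*T^5*d^14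 - 16*s^10*p*T^5*d^15 - 3*s^10*p^3*T^3*d^14*P^2 + 18*s^10*p^3*T^3*d^15*P^2 - 6*s^10*p^3*T^3*d^16*P^2 - 6*s^10*p^3*T^4*d^12*P - 12*s^10*p^3*T^4*d^13*P + 72*s^10*p^3*T^4*d^14*P - 24*s^10*p^3*T^4*d^15*P - 12*s^10*p^3*T^5*d^10 + 69*s^10*p^3*T^5*d^11 + 132*s^10*p^3*T^5*d^12 - 360*s^10*p^3*T^5*d^13 + 244*s^10*p^3*T^5*d^14 - 40*s^10*p^3*T^5*d^15 - 3*s^10*p^5*T^3*d^13*P^2 + 12*s^10*p^5*T^3*d^14*P^2 - 12*s^10*p^5*T^3*d^15*P^2 - 6*s^10*p^5*T^4*d^11*P - 12*s^10*p^5*T^4*d^12*P + 72*s^10*p^5*T^4*d^13*P - 48*s^10*p^5*T^4*d^14*P - 3*s^10*p^5*T^5*d^9 + 27*s^10*p^5*T^5*d^10 + 514*s^10*p^5*T^5*d^11 - 751*s^10*p^5*T^5*d^12 + 332*s^10*p^5*T^5*d^13 - 44*s^10*p^5*T^5*d^14 + 3*s^11*T^4*d^15*P + 6*s^11*T^5*d^14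 + 3*s^11*p^2*T^2*d^16*P^3 + 3*s^11*p^2*T^2*d^17*P^3 + 18*s^11*p^2*T^3*d^16*P^2 + 27*s^11*p^2*T^4*d^13*P + 60*s^11*p^2*T^4*d^14*P - 74*s^11*p^2*T^4*d^15*P + 20*s^11*p^2*T^4*d^16*P + 54*s^11*p^2*T^5*d^11 - 42*s^11*p^2*T^5*d^12 + 92*s^11*p^2*T^5*d^13 - 124*s^11*p^2*T^5*d^14 + 40*s^11*p^2*T^5*d^15 + 4*s^11*p^4*T^2*d^16*P^3 - 12*s^11*p^4*T^3*d^14*P^2 + 24*s^11*p^4*T^3*d^15*P^2 + 3*s^11*p^4*T^4*d^11*P + 10*s^11*p^4*T^4*d^12*P + 108*s^11*p^4*T^4*d^13*P - 86*s^11*p^4*T^4*d^14*P + 20*s^11*p^4*T^4*d^15*P + 12*s^11*p^4*T^5*d^9 + 22*s^11*p^4*T^5*d^10 - 52*s^11*p^4*T^5*d^11 + 236*s^11*p^4*T^5*d^12 - 196*s^11*p^4*T^5*d^13 + 40*s^11*p^4*T^5*d^14 - 3*s^12*p*T*d^18*P^4 + 6*s^12*p*T^2*d^16*P^3 - 24*s^12*p*T^2*d^17*P^3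 + 69*s^12*p*T^3*d^15*P^2 - 60*s^12*p*T^3*d^16*P^2 - 20*s^12*p*T^3*d^17*P^2 + 72*s^12*p*T^4*d^14*P + 24*s^12*p*T^4*d^15*P - 80*s^12*p*T^4*d^16*P - 18*s^12*p*T^5*d^12 + 138*s^12*p*T^5*d^13 - 160*s^12*p*T^5*d^14 + 56*s^12*p*T^5*d^15 - 16*s^12*p*T^5*d^16 - 1*s^12*p^3*T*d^17*P^4 + 2*s^12*p^3*T^2*d^15*P^3 - 8*s^12*p^3*T^2*d^16*P^3 + 1*s^12*p^3*T^3*d^13*P^2 + 21*s^12*p^3*T^3*d^14*P^2 + 18*s^12*p^3*T^3*d^15*P^2 - 9*s^12*p^3*T^3*d^16*P^2 + 2*s^12*p^3*T^4*d^11*P + 4*s^12*p^3*T^4*d^12*P - 72*s^12*p^3*T^4*d^13*P + 132*s^12*p^3*T^4*d^14*P - 36*s^12*p^3*T^4*d^15*P + 4*s^12*p^3*T^5*d^9 - 41*s^12*p^3*T^5*d^10 - 248*s^12*p^3*T^5*d^11 + 587*s^12*p^3*T^5*d^12 - 406*s^12*p^3*T^5*d^13 + 104*s^12*p^3*T^5*d^14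 - 8*s^12*p^3*T^5*d^15 - 3*s^13*T^2*d^17*P^3 + 6*s^13*T^3*d^15*P^2 - 18*s^13*T^3*d^16*P^2 + 54*s^13*T^4*d^14*P - 30*s^13*T^4*d^15*P - 20*s^13*T^4*d^16*P - 24*s^13*T^5*d^13 + 60*s^13*T^5*d^14 - 40*s^13*T^5*d^15 + 3*s^13*p^2*T^2*d^15*P^3 + 4*s^13*p^2*T^2*d^17*P^3 + 6*s^13*p^2*T^3*d^14*P^2 - 24*s^13*p^2*T^3*d^15*P^2 + 24*s^13*p^2*T^3*d^16*P^2 - 15*s^13*p^2*T^4*d^12*P - 42*s^13*p^2*T^4*d^13*P + 37*s^13*p^2*T^4*d^14*P - 4*s^13*p^2*T^4*d^15*P + 4*s^13*p^2*T^4*d^16*P - 30*s^13*p^2*T^5*d^10 + 18*s^13*p^2*T^5*d^11 - 142*s^13*p^2*T^5*d^12 + 194*s^13*p^2*T^5*d^13 - 80*s^13*p^2*T^5*d^14 + 8*s^13*p^2*T^5*d^15 - 3*s^14*p*T*d^17*P^4 - 2*s^14*p*T*d^18*P^4 + 6*s^14*p*T^2*d^15*P^3 - 8*s^14*p*T^2*d^16*P^3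 - 16*s^14*p*T^2*d^17*P^3 + 27*s^14*p*T^3*d^14*P^2 - 24*s^14*p*T^3*d^15*P^2 - 25*s^14*p*T^3*d^16*P^2 - 2*s^14*p*T^3*d^17*P^2 + 24*s^14*p*T^4*d^13*P - 84*s^14*p*T^4*d^14*P + 36*s^14*p*T^4*d^15*P - 8*s^14*p*T^4*d^16*P + 48*s^14*p*T^5*d^11 - 168*s^14*p*T^5*d^12 + 160*s^14*p*T^5*d^13 - 60*s^14*p*T^5*d^14 + 8*s^14*p*T^5*d^15 + 1*s^15*d^19*P^5 - 4*s^15*T*d^17*P^4 + 10*s^15*T*d^18*P^4 + 4*s^15*T^2*d^15*P^3 - 47*s^15*T^2*d^16*P^3 + 10*s^15*T^2*d^17*P^3 + 1*s^15*T^2*d^18*P^3 + 54*s^15*T^3*d^14*P^2 - 18*s^15*T^3*d^15*P^2 - 66*s^15*T^3*d^16*P^2 + 6*s^15*T^3*d^17*P^2 + 16*s^15*T^4*d^14*P - 16*s^15*T^4*d^15*P - 12*s^15*T^4*d^16*P + 32*s^15*T^5*d^12 - 64*s^15*T^5*d^13 + 40*s^15*T^5*d^14 - 8*s^15*T^5*d^15))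 * h1 + ((-1*s^6*p^4*T^4*d^15 - 2*s^7*p^3*T^3*d^16*P - 4*s^7*p^3*T^4*d^15 - 1*s^8*p^2*T^2*d^17*P^2 - 4*s^8*p^2*T^3*d^16*P - 6*s^8*p^2*T^4*d^15 - 2*s^9*p*T^3*d^16*P - 4*s^9*p*T^4*d^15 - 4*s^9*p^3*T^3*d^15*P - 1*s^10*T^4*d^15 - 4*s^10*p^2*T^2*d^16*P^2 - 1*s^10*p^2*T^2*d^17*Q + 3*s^10*p^2*T^2*d^17*P^2 - 12*s^10*p^2*T^3*d^15*P + 12*s^10*p^2*T^3*d^16*P - 27*s^10*p^2*T^4*d^14 + 36*s^10*p^2*T^4*d^15 - 8*s^10*p^2*T^4*d^16 - 1*s^11*p*T*d^18*P*Q + 3*s^11*p*T*d^18*P^3 - 4*s^11*p*T^2*d^16*P^2 - 2*s^11*p*T^2*d^17*Q + 18*s^11*p*T^2*d^17*P^2 - 39*s^11*p*T^3*d^15*P + 60*s^11*p*T^3*d^16*P - 8*s^11*p*T^3*d^17*P - 54*s^11*p*T^4*d^14 + 72*s^11*p*T^4*d^15 - 16*s^11*p*T^4*d^16 - 1*s^12*T^2*d^17*Q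 + 3*s^12*T^2*d^17*P^2 - 4*s^12*T^3*d^15*P + 12*s^12*T^3*d^16*P - 27*s^12*T^4*d^14 + 36*s^12*T^4*d^15 - 8*s^12*T^4*d^16 - 4*s^12*p^2*T^2*d^15*P^2 - 2*s^13*p*T*d^17*P*Q + 6*s^13*p*T*d^17*P^3 - 8*s^13*p*T^2*d^15*P^2 + 24*s^13*p*T^2*d^16*P^2 - 54*s^13*p*T^3*d^14*P + 72*s^13*p*T^3*d^15*P - 16*s^13*p*T^3*d^16*P - 1*s^14*d^19*Q^2 + 3*s^14*d^19*P^2*Q - 3*s^14*d^19*P^4 - 2*s^14*T*d^17*P*Q + 6*s^14*T*d^17*P^3 + 12*s^14*T*d^18*P*Q - 24*s^14*T*d^18*P^3 - 4*s^14*T^2*d^15*P^2 - 27*s^14*T^2*d^16*Q + 78*s^14*T^2*d^16*P^2 + 36*s^14*T^2*d^17*Q - 66*s^14*T^2*d^17*P^2 - 8*s^14*T^2*d^18*Q - 20*s^14*T^2*d^18*P^2 - 54*s^14*T^3*d^14*P + 72*s^14*T^3*d^15*P + 56*s^14*T^3*d^16*P - 80*s^14*T^3*d^17*P + 16*s^14*T^4*d^16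 - 16*s^14*T^4*d^17)) * h2 + ((-1*p^12*T^6*d^11 - 2*p^14*T^6*d^10 - 1*p^16*T^6*d^9 + 9*s^2*p^10*T^6*d^11 - 3*s^2*p^10*T^6*d^12 + 20*s^2*p^12*T^6*d^10 - 15*s^2*p^12*T^6*d^11 + 11*s^2*p^14*T^6*d^9 - 12*s^2*p^14*T^6*d^10 + 6*s^3*p^9*T^6*d^11 + 12*s^3*p^11*T^6*d^10 + 6*s^3*p^13*T^6*d^9 - 27*s^4*p^8*T^6*d^11 + 21*s^4*p^8*T^6*d^12 - 3*s^4*p^8*T^6*d^13 - 72*s^4*p^10*T^6*d^10 + 120*s^4*p^10*T^6*d^11 - 36*s^4*p^10*T^6*d^12 - 46*s^4*p^12*T^6*d^9 + 108*s^4*p^12*T^6*d^10 - 60*s^4*p^12*T^6*d^11 - 36*s^5*p^7*T^6*d^11 + 12*s^5*p^7*T^6*d^12 - 84*s^5*p^9*T^6*d^10 + 60*s^5*p^9*T^6*d^11 - 48*s^5*p^11*T^6*d^9 + 48*s^5*p^11*T^6*d^10 + 15*s^6*p^6*T^6*d^11 - 45*s^6*p^6*T^6*d^12 + 15*s^6*p^6*T^6*d^13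 - 1*s^6*p^6*T^6*d^14 + 84*s^6*p^8*T^6*d^10 - 303*s^6*p^8*T^6*d^11 + 192*s^6*p^8*T^6*d^12 - 27*s^6*p^8*T^6*d^13 + 78*s^6*p^10*T^6*d^9 - 333*s^6*p^10*T^6*d^10 + 450*s^6*p^10*T^6*d^11 - 161*s^6*p^10*T^6*d^12 + 54*s^7*p^5*T^6*d^11 - 48*s^7*p^5*T^6*d^12 + 6*s^7*p^5*T^6*d^13 + 180*s^7*p^7*T^6*d^10 - 300*s^7*p^7*T^6*d^11 + 96*s^7*p^7*T^6*d^12 + 132*s^7*p^9*T^6*d^9 - 288*s^7*p^9*T^6*d^10 + 144*s^7*p^9*T^6*d^11 + 36*s^8*p^4*T^6*d^11 + 15*s^8*p^4*T^6*d^12 - 21*s^8*p^4*T^6*d^13 + 3*s^8*p^4*T^6*d^14 + 42*s^8*p^6*T^6*d^10 + 138*s^8*p^6*T^6*d^11 - 198*s^8*p^6*T^6*d^12 + 44*s^8*p^6*T^6*d^13 + 4*s^8*p^6*T^6*d^14 - 21*s^8*p^8*T^6*d^9 + 315*s^8*p^8*T^6*d^10 - 1146*s^8*p^8*T^6*d^11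 + 1011*s^8*p^8*T^6*d^12 - 248*s^8*p^8*T^6*d^13 + 8*s^9*p^3*T^6*d^11 + 36*s^9*p^3*T^6*d^12 - 12*s^9*p^3*T^6*d^13 - 92*s^9*p^5*T^6*d^10 + 312*s^9*p^5*T^6*d^11 - 192*s^9*p^5*T^6*d^12 + 16*s^9*p^5*T^6*d^13 - 136*s^9*p^7*T^6*d^9 + 468*s^9*p^7*T^6*d^10 - 588*s^9*p^7*T^6*d^11 + 232*s^9*p^7*T^6*d^12 + 12*s^10*p^2*T^6*d^12 + 9*s^10*p^2*T^6*d^13 - 3*s^10*p^2*T^6*d^14 - 72*s^10*p^4*T^6*d^10 + 228*s^10*p^4*T^6*d^11 - 240*s^10*p^4*T^6*d^12 + 153*s^10*p^4*T^6*d^13 - 64*s^10*p^4*T^6*d^14 + 8*s^10*p^4*T^6*d^15 - 57*s^10*p^6*T^6*d^9 + 153*s^10*p^6*T^6*d^10 + 1134*s^10*p^6*T^6*d^11 - 2203*s^10*p^6*T^6*d^12 + 1264*s^10*p^6*T^6*d^13 - 216*s^10*p^6*T^6*d^14 + 6*s^11*p*T^6*d^13 - 16*s^11*p^3*T^6*d^10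 + 144*s^11*p^3*T^6*d^11 - 252*s^11*p^3*T^6*d^12 + 144*s^11*p^3*T^6*d^13 - 32*s^11*p^3*T^6*d^14 + 38*s^11*p^5*T^6*d^9 - 48*s^11*p^5*T^6*d^10 + 552*s^11*p^5*T^6*d^11 - 736*s^11*p^5*T^6*d^12 + 256*s^11*p^5*T^6*d^13 + 1*s^12*T^6*d^14 + 48*s^12*p^2*T^6*d^11 - 6*s^12*p^2*T^6*d^12 - 122*s^12*p^2*T^6*d^13 + 84*s^12*p^2*T^6*d^14 - 16*s^12*p^2*T^6*d^15 + 36*s^12*p^4*T^6*d^9 - 171*s^12*p^4*T^6*d^10 - 618*s^12*p^4*T^6*d^11 + 2145*s^12*p^4*T^6*d^12 - 2120*s^12*p^4*T^6*d^13 + 816*s^12*p^4*T^6*d^14 - 96*s^12*p^4*T^6*d^15 + 60*s^13*p*T^6*d^12 - 96*s^13*p*T^6*d^13 + 32*s^13*p*T^6*d^14 + 8*s^13*p^3*T^6*d^9 - 180*s^13*p^3*T^6*d^10 - 204*s^13*p^3*T^6*d^11 + 840*s^13*p^3*T^6*d^12 - 656*s^13*p^3*T^6*d^13 + 160*s^13*p^3*T^6*d^14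 + 16*s^14*T^6*d^13 - 24*s^14*T^6*d^14 + 8*s^14*T^6*d^15 - 60*s^14*p^2*T^6*d^10 + 240*s^14*p^2*T^6*d^11 - 856*s^14*p^2*T^6*d^12 + 1296*s^14*p^2*T^6*d^13 - 840*s^14*p^2*T^6*d^14 + 224*s^14*p^2*T^6*d^15 - 16*s^14*p^2*T^6*d^16 + 96*s^15*p*T^6*d^11 - 336*s^15*p*T^6*d^12 + 400*s^15*p*T^6*d^13 - 192*s^15*p*T^6*d^14 + 32*s^15*p*T^6*d^15 + 64*s^16*T^6*d^12 - 192*s^16*T^6*d^13 + 208*s^16*T^6*d^14 - 96*s^16*T^6*d^15 + 16*s^16*T^6*d^16)) * hs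


/-- The quartic equation satisfied by the co-metric `T = B*(x,ξ)` of Berwald's metric,
with `A = (1-‖x‖²)³(‖ξ‖² - ⟨x,ξ⟩²)` and `β = (1-‖x‖²)²⟨x,ξ⟩`. -/
theorem berwald_costar_quartic (n : ℕ) (hn : 2 ≤ n)
    (x ξ : EuclideanSpace ℝ (Fin n)) (hx : ‖x‖ < 1) (hξ : ξ ≠ 0) :
    let A : ℝ := (1 - ‖x‖ ^ 2) ^ 3 * (‖ξ‖ ^ 2 - ⟪x, ξ⟫ ^ 2)
    let β : ℝ := (1 - ‖x‖ ^ 2) ^ 2 * ⟪x, ξ⟫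
    let T : ℝ := berwaldCo n x ξ
    16 * ‖x‖ ^ 2 * (1 - ‖x‖ ^ 2) ^ 2 * ((1 - ‖x‖ ^ 2) * A + β ^ 2) * T ^ 4
      + 8 * ((10 * ‖x‖ ^ 2 - 1) * (1 - ‖x‖ ^ 2) * A * β + (9 * ‖x‖ ^ 2 - 1) * β ^ 3) * T ^ 3
      + ((1 - 20 * ‖x‖ ^ 2 - 8 * ‖x‖ ^ 4) * A ^ 2 + 6 * (6 * ‖x‖ ^ 2 - 5) * A * β ^ 2
          - 27 * β ^ 4) * T ^ 2
      + 12 * A ^ 2 * β * T - A ^ 3 = 0 := by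
  intro A β T
  have hA : A = (1 - ‖x‖ ^ 2) ^ 3 * (‖ξ‖ ^ 2 - ⟪x, ξ⟫ ^ 2) := rfl
  have hβ : β = (1 - ‖x‖ ^ 2) ^ 2 * ⟪x, ξ⟫ := rfl
  have hd : (0:ℝ) < 1 - ‖x‖ ^ 2 := by nlinarith [norm_nonneg x]
  -- the function being maximized
  set g : EuclideanSpace ℝ (Fin n) → ℝ := fun y => ⟪ξ, y⟫ / berwald n x y with hg
  -- continuity on the unit sphere
  have hxine : ∀ y ∈ Metric.sphere (0 : EuclideanSpace ℝ (Fin n)) 1, y ≠ 0 := by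
    intro y hy
    have : ‖y‖ = 1 := mem_sphere_zero_iff_norm.mp hy
    intro h; rw [h] at this; simp at this
  have hcont : ContinuousOn g (Metric.sphere (0 : EuclideanSpace ℝ (Fin n)) 1) := by
    have hc1 : Continuous fun y : EuclideanSpace ℝ (Fin n) => ⟪ξ, y⟫ :=
      continuous_const.inner continuous_id
    have hc2 : Continuous fun y : EuclideanSpace ℝ (Fin n) => ⟪x, y⟫ :=
      continuous_const.inner continuous_id
    have hc3 : Continuous fun y : EuclideanSpace ℝ (Fin n) =>
        Real.sqrt ((1 - ‖x‖ ^ 2) * ‖y‖ ^ 2 + ⟪x, y⟫ ^ 2) :=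
      Real.continuous_sqrt.comp ((continuous_const.mul (continuous_norm.pow 2)).add (hc2.pow 2))
    have hG : ContinuousOn (fun y : EuclideanSpace ℝ (Fin n) =>
        ⟪ξ, y⟫ * ((1 - ‖x‖ ^ 2) ^ 2 * Real.sqrt ((1 - ‖x‖ ^ 2) * ‖y‖ ^ 2 + ⟪x, y⟫ ^ 2))
          / (Real.sqrt ((1 - ‖x‖ ^ 2) * ‖y‖ ^ 2 + ⟪x, y⟫ ^ 2) + ⟪x, y⟫) ^ 2)
        (Metric.sphere (0 : EuclideanSpace ℝ (Fin n)) 1) := by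
      apply ContinuousOn.div ((hc1.mul (continuous_const.mul hc3)).continuousOn)
        (((hc3.add hc2).pow 2).continuousOn)
      intro y hy
      exact pow_ne_zero 2 (BerwaldAux.sqrt_add_pos hx (hxine y hy)).ne'
    refine hG.congr fun y hy => ?_
    rw [hg]
    simp only
    rw [berwald, if_neg (hxine y hy), div_div_eq_mul_div]
  have hsne : (Metric.sphere (0 : EuclideanSpace ℝ (Fin n)) 1).Nonempty := by
    refine ⟨‖ξ‖⁻¹ • ξ, ?_⟩
    have : ‖ξ‖ ≠ 0 := norm_ne_zero_iff.mpr hξ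
    simp [norm_smul, abs_of_nonneg (inv_nonneg.mpr (norm_nonneg ξ)), inv_mul_cancel₀ this]
  obtain ⟨y₀, hy₀s, hmax⟩ :=
    (isCompact_sphere (0 : EuclideanSpace ℝ (Fin n)) 1).exists_isMaxOn hsne hcont
  have hy₀n : ‖y₀‖ = 1 := mem_sphere_zero_iff_norm.mp hy₀s
  have hy₀ne : y₀ ≠ 0 := hxine y₀ hy₀s
  -- global bound
  have hub : ∀ y : EuclideanSpace ℝ (Fin n), y ≠ 0 → g y ≤ g y₀ := by
    intro y hy
    have hny : 0 < ‖y‖ := norm_pos_iff.mpr hy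
    have hmem : ‖y‖⁻¹ • y ∈ Metric.sphere (0 : EuclideanSpace ℝ (Fin n)) 1 := by
      simp [norm_smul, abs_of_pos (inv_pos.mpr hny), inv_mul_cancel₀ hny.ne']
    have h1 : g (‖y‖⁻¹ • y) ≤ g y₀ := hmax hmem
    have h2 : g (‖y‖⁻¹ • y) = g y := by
      rw [hg]
      simp only
      rw [BerwaldAux.berwald_smul hx hy (inv_pos.mpr hny), real_inner_smul_right]
      rw [mul_div_mul_left _ _ (inv_pos.mpr hny).ne']
    linarith
  -- T is the max
  have hTeq : T = g y₀ := by
    have hbdd : BddAbove (Set.range fun y : {y : EuclideanSpace ℝ (Fin n) // y ≠ 0} =>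
        ⟪ξ, (y : EuclideanSpace ℝ (Fin n))⟫ / berwald n x (y : EuclideanSpace ℝ (Fin n))) := by
      refine ⟨g y₀, ?_⟩
      rintro _ ⟨y, rfl⟩
      exact hub y y.2
    haveI : Nonempty {y : EuclideanSpace ℝ (Fin n) // y ≠ 0} := ⟨⟨y₀, hy₀ne⟩⟩
    refine le_antisymm (ciSup_le fun y => hub y y.2) ?_
    exact le_ciSup hbdd (⟨y₀, hy₀ne⟩ : {y : EuclideanSpace ℝ (Fin n) // y ≠ 0})
  have hTpos : 0 < T := by
    rw [hTeq]
    have h1 : 0 < g ξ := by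
      rw [hg]
      simp only
      apply div_pos _ (BerwaldAux.berwald_pos hx hξ)
      rw [real_inner_self_eq_norm_sq]
      exact pow_pos (norm_pos_iff.mpr hξ) 2
    exact lt_of_lt_of_le h1 (hub ξ hξ)
  -- notation at the maximizer
  set pp := ⟪x, y₀⟫ with hppd
  set s := Real.sqrt (1 - ‖x‖ ^ 2 + pp ^ 2) with hsd
  have hargpos : (0:ℝ) < 1 - ‖x‖ ^ 2 + pp ^ 2 := by nlinarith [sq_nonneg pp]
  have hs2 : s ^ 2 = 1 - ‖x‖ ^ 2 + pp ^ 2 := Real.sq_sqrt hargpos.le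
  have hspos : 0 < s := Real.sqrt_pos.mpr hargpos
  have hsppos : 0 < s + pp := by nlinarith [hs2, hspos, hd]
  set qq := ⟪ξ, y₀⟫ with hqqd
  have hB0 : berwald n x y₀ = (s + pp) ^ 2 / ((1 - ‖x‖ ^ 2) ^ 2 * s) := by
    rw [berwald, if_neg hy₀ne]
    have harg : (1 - ‖x‖ ^ 2) * (1:ℝ) ^ 2 + pp ^ 2 = 1 - ‖x‖ ^ 2 + pp ^ 2 := by ring
    rw [hy₀n, ← hppd, harg, ← hsd]
  have hq' : qq * ((1 - ‖x‖ ^ 2) ^ 2 * s) = T * (s + pp) ^ 2 := by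
    have h1 : T = qq / berwald n x y₀ := hTeq
    rw [hB0, div_div_eq_mul_div] at h1
    have h2 := (eq_div_iff (pow_ne_zero 2 hsppos.ne')).mp h1
    exact h2.symm
  -- first-order conditions in the directions x and ξ
  have Ex := BerwaldAux.deriv_condition hx hy₀n hub x
  have Eξ := BerwaldAux.deriv_condition hx hy₀n hub ξ
  rw [real_inner_comm x y₀, real_inner_self_eq_norm_sq, real_inner_comm x ξ,
    ← hppd, ← hsd] at Ex
  rw [real_inner_comm ξ y₀, real_inner_self_eq_norm_sq, ← hppd, ← hqqd, ← hsd] at Eξ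
  have h1 : ⟪x, ξ⟫ * ((1 - ‖x‖ ^ 2) ^ 2 * s ^ 3)
      = T * (s + pp) * (2 * (1 - (1 - ‖x‖ ^ 2)) * s ^ 2 + (s - pp) * pp) := by
    have h1m : ⟪x, ξ⟫ * ((1 - ‖x‖ ^ 2) ^ 2 * s ^ 3) * (s + pp)
        = T * (s + pp) * (2 * (1 - (1 - ‖x‖ ^ 2)) * s ^ 2 + (s - pp) * pp) * (s + pp) := by
      linear_combination ((1 - ‖x‖ ^ 2) ^ 2 * s) * Ex
        + ((s - pp) * ((1 - ‖x‖ ^ 2) * pp + pp * ‖x‖ ^ 2) + 2 * ‖x‖ ^ 2 * s ^ 2) * hq'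
    exact mul_right_cancel₀ hsppos.ne' h1m
  have h2 : ‖ξ‖ ^ 2 * ((1 - ‖x‖ ^ 2) ^ 2 * s ^ 4)
      = T * (2 * ⟪x, ξ⟫ * s ^ 3 * (s + pp) + T * (s + pp) ^ 2
          + (1 - ‖x‖ ^ 2) * pp * ⟪x, ξ⟫ * s) := by
    have h2m : ‖ξ‖ ^ 2 * ((1 - ‖x‖ ^ 2) ^ 2 * s ^ 4) * ((1 - ‖x‖ ^ 2) ^ 2 * (s + pp))
        = T * (2 * ⟪x, ξ⟫ * s ^ 3 * (s + pp) + T * (s + pp) ^ 2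
            + (1 - ‖x‖ ^ 2) * pp * ⟪x, ξ⟫ * s) * ((1 - ‖x‖ ^ 2) ^ 2 * (s + pp)) := by
      linear_combination ((1 - ‖x‖ ^ 2) ^ 4 * s ^ 2) * Eξ
        + ((s - pp) * (1 - ‖x‖ ^ 2) * (qq * (1 - ‖x‖ ^ 2) ^ 2 * s + T * (s + pp) ^ 2)
            + (1 - ‖x‖ ^ 2) ^ 2 * s * ((s - pp) * pp * ⟪x, ξ⟫ + 2 * ⟪x, ξ⟫ * s ^ 2)) * hq'
        + (T ^ 2 * (1 - ‖x‖ ^ 2) * (s + pp) ^ 3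
            + (1 - ‖x‖ ^ 2) ^ 2 * s * pp * ⟪x, ξ⟫ * T * (s + pp)) * hs2
    exact mul_right_cancel₀ (mul_pos (pow_pos hd 2) hsppos).ne' h2m
  have key := key_quartic s pp T (1 - ‖x‖ ^ 2) ⟪x, ξ⟫ (‖ξ‖ ^ 2) h1 h2 hs2
  have hne : ((1 - ‖x‖ ^ 2) ^ 12 * s ^ 18) ≠ 0 :=
    mul_ne_zero (pow_ne_zero _ hd.ne') (pow_ne_zero _ hspos.ne')
  have hq0 := (mul_eq_zero.mp key).resolve_right hne
  rw [hA, hβ]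
  linear_combination hq0
end
end

section
/- The L^p-Hardy inequality fails on Berwald's metric space: for every p ∈ (1,n), the infimum over all nonzero smooth functions f with compact support in 𝔹ⁿ of the quotient [∫_{𝔹ⁿ} B*(x, df(x))^p dx] / [∫_{𝔹ⁿ} |f(x)|^p · r(x)^{−p} dx] equals 0 (for every such nonzero f the denominator is finite and positive); equivalently, for every ε > 0 there is a nonzero f ∈ C_c^∞(𝔹ⁿ) with ∫_{𝔹ⁿ} B*(x,df)^p dx ≤ ε · ∫_{𝔹ⁿ} |f|^p r^{−p} dx. -/
open MeasureTheory Filter Metric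
open scoped Classical RealInnerProductSpace ENNReal Topology

noncomputable section

/-- The Berwald distance from the origin, `r(x) = ‖x‖/(1-‖x‖)`. -/
def rB (n : ℕ) (x : EuclideanSpace ℝ (Fin n)) : ℝ := ‖x‖ / (1 - ‖x‖)

lemma berwald_pos {n : ℕ} {x y : EuclideanSpace ℝ (Fin n)} (hx : ‖x‖ < 1) (hy : y ≠ 0) :
    0 < berwald n x y := by
  rw [berwald, if_neg hy]
  set w := ⟪x, y⟫ with hw
  have hy0 : 0 < ‖y‖ := norm_pos_iff.mpr hy
  have hx2 : 0 < 1 - ‖x‖ ^ 2 := by nlinarith [norm_nonneg x]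
  have hA : w ^ 2 < (1 - ‖x‖ ^ 2) * ‖y‖ ^ 2 + w ^ 2 := by
    nlinarith [mul_pos hx2 (pow_pos hy0 2)]
  have hs : |w| < Real.sqrt ((1 - ‖x‖ ^ 2) * ‖y‖ ^ 2 + w ^ 2) := by
    rw [← Real.sqrt_sq_eq_abs]
    exact Real.sqrt_lt_sqrt (sq_nonneg w) hA
  have h3 : 0 < Real.sqrt ((1 - ‖x‖ ^ 2) * ‖y‖ ^ 2 + w ^ 2) + w := by
    have := neg_abs_le w; linarith
  exact div_pos (pow_pos h3 2)
    (mul_pos (pow_pos hx2 2) ((abs_nonneg w).trans_lt hs))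

lemma berwald_term_le {n : ℕ} {x : EuclideanSpace ℝ (Fin n)} (hx : ‖x‖ < 1) {c : ℝ}
    (hc : 0 ≤ c) {y : EuclideanSpace ℝ (Fin n)} (hy : y ≠ 0) :
    ⟪c • x, y⟫ / berwald n x y ≤ c * (‖x‖ * (1 - ‖x‖) ^ 2) := by
  have hB := berwald_pos hx hy
  rw [div_le_iff₀ hB, real_inner_smul_left]
  have key : ⟪x, y⟫ ≤ ‖x‖ * (1 - ‖x‖) ^ 2 * berwald n x y := by
    rw [berwald, if_neg hy]
    set t := ‖x‖ with ht
    set w := ⟪x, y⟫ with hw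
    have ht0 : 0 ≤ t := norm_nonneg x
    have hy0 : 0 < ‖y‖ := norm_pos_iff.mpr hy
    have hx2 : 0 < 1 - t ^ 2 := by nlinarith
    set A := (1 - t ^ 2) * ‖y‖ ^ 2 + w ^ 2 with hA
    have hA0 : 0 < A := by positivity
    set s := Real.sqrt A with hsdef
    have hs2 : s ^ 2 = A := Real.sq_sqrt hA0.le
    have hs0 : 0 < s := Real.sqrt_pos.mpr hA0
    rcases le_or_gt w 0 with hw0 | hw0
    · refine hw0.trans ?_
      have hsw : 0 ≤ s + w := by
        nlinarith [sq_nonneg (s + w), sq_nonneg (s - w), sq_nonneg w]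
      positivity
    · have hcs : w ≤ t * ‖y‖ := real_inner_le_norm x y
      have ht' : 0 < t := by
        rcases ht0.lt_or_eq with h | h
        · exact h
        · exfalso; nlinarith
      have hw2 : w ^ 2 ≤ t ^ 2 * ‖y‖ ^ 2 := by nlinarith
      have hts2 : w ^ 2 ≤ (t * s) ^ 2 := by
        nlinarith [mul_nonneg hx2.le (sub_nonneg.2 hw2)]
      have h1 : w ≤ t * s := by nlinarith [mul_pos ht' hs0]
      have hwt2 : (w * t) ^ 2 ≤ s ^ 2 := by
        nlinarith [mul_nonneg hx2.le (sq_nonneg ‖y‖), sq_nonneg w, sq_nonneg (w * t),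
          mul_nonneg (sq_nonneg w) hx2.le]
      have h2 : w * t ≤ s := by nlinarith [mul_pos hw0 ht']
      rw [mul_div_assoc' (c := (1 - t ^ 2) ^ 2 * s)]
      rw [le_div_iff₀ (by positivity)]
      have hid : t * (1 - t) ^ 2 * (s + w) ^ 2 - w * ((1 - t ^ 2) ^ 2 * s)
          = (1 - t) ^ 2 * ((t * s - w) * (s - w * t)) := by ring
      nlinarith [mul_nonneg (mul_nonneg (sq_nonneg (1 - t)) (sub_nonneg.2 h1))
        (sub_nonneg.2 h2)]
  calc c * ⟪x, y⟫ ≤ c * (‖x‖ * (1 - ‖x‖) ^ 2 * berwald n x y) :=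
        mul_le_mul_of_nonneg_left key hc
    _ = c * (‖x‖ * (1 - ‖x‖) ^ 2) * berwald n x y := by ring

lemma nonempty_ne_zero {n : ℕ} (hn : 0 < n) : Nonempty {y : EuclideanSpace ℝ (Fin n) // y ≠ 0} := by
  refine ⟨⟨EuclideanSpace.single ⟨0, hn⟩ (1 : ℝ), ?_⟩⟩
  intro h
  have := congrArg (fun z => z ⟨0, hn⟩) h
  simp [EuclideanSpace.single_apply] at this

lemma berwaldCo_le {n : ℕ} (hn : 0 < n) {x : EuclideanSpace ℝ (Fin n)} (hx : ‖x‖ < 1) {c : ℝ}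
    (hc : 0 ≤ c) : berwaldCo n x (c • x) ≤ c * (‖x‖ * (1 - ‖x‖) ^ 2) := by
  haveI := nonempty_ne_zero hn
  exact ciSup_le fun y => berwald_term_le hx hc y.2

lemma berwaldCo_nonneg {n : ℕ} (hn : 0 < n) {x : EuclideanSpace ℝ (Fin n)} (hx : ‖x‖ < 1) {c : ℝ}
    (hc : 0 ≤ c) : 0 ≤ berwaldCo n x (c • x) := by
  haveI := nonempty_ne_zero hn
  rcases eq_or_ne x 0 with rfl | hx0
  · have : ∀ y : {y : EuclideanSpace ℝ (Fin n) // y ≠ 0},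
        ⟪c • (0 : EuclideanSpace ℝ (Fin n)), (y : EuclideanSpace ℝ (Fin n))⟫ /
          berwald n 0 (y : EuclideanSpace ℝ (Fin n)) = 0 := by
      intro y; simp
    rw [berwaldCo]
    simp only [this]
    rw [ciSup_const]
  · have hbdd : BddAbove (Set.range fun y : {y : EuclideanSpace ℝ (Fin n) // y ≠ 0} =>
        ⟪c • x, (y : EuclideanSpace ℝ (Fin n))⟫ / berwald n x (y : EuclideanSpace ℝ (Fin n))) := by
      refine ⟨c * (‖x‖ * (1 - ‖x‖) ^ 2), ?_⟩
      rintro r ⟨y, rfl⟩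
      exact berwald_term_le hx hc y.2
    have hterm : 0 ≤ ⟪c • x, x⟫ / berwald n x x := by
      apply div_nonneg _ (berwald_pos hx hx0).le
      rw [real_inner_smul_left]
      exact mul_nonneg hc (real_inner_self_nonneg)
    exact hterm.trans (le_ciSup hbdd ⟨x, hx0⟩)

lemma integrableOn_norm_rpow_ball {n : ℕ} (hn : 0 < n) {p : ℝ} (hp : 0 < p)
    (hpn : p < n) :
    IntegrableOn (fun x : EuclideanSpace ℝ (Fin n) => ‖x‖ ^ (-p))
      (ball (0 : EuclideanSpace ℝ (Fin n)) 1) := by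
  haveI : Nonempty (Fin n) := ⟨⟨0, hn⟩⟩
  set E := EuclideanSpace ℝ (Fin n) with hE
  constructor
  · exact (measurable_norm.pow measurable_const).aestronglyMeasurable
  · rw [hasFiniteIntegral_iff_norm]
    set S : ℕ → Set E := fun k =>
      ball (0 : E) ((2:ℝ) ^ (-(k:ℝ))) \ ball 0 ((2:ℝ) ^ (-(k:ℝ) - 1)) with hS
    have hcover : ball (0 : E) 1 ⊆ {0} ∪ ⋃ k, S k := by
      intro x hx
      rcases eq_or_ne x 0 with rfl | hx0
      · exact Or.inl rfl
      · have hx1 : ‖x‖ < 1 := mem_ball_zero_iff.1 hx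
        have hx0' : 0 < ‖x‖ := norm_pos_iff.2 hx0
        have hex : ∃ m : ℕ, (2:ℝ) ^ (-(m:ℝ) - 1) ≤ ‖x‖ := by
          obtain ⟨m, hm⟩ := exists_pow_lt_of_lt_one hx0' (by norm_num : (1:ℝ)/2 < 1)
          refine ⟨m, le_trans ?_ hm.le⟩
          have h1 : ((1:ℝ)/2) ^ m = (2:ℝ) ^ (-(m:ℝ)) := by
            rw [Real.rpow_neg (by norm_num : (0:ℝ) ≤ 2), Real.rpow_natCast, div_pow, one_pow,
              one_div]
          rw [h1]
          exact Real.rpow_le_rpow_of_exponent_le (by norm_num) (by linarith)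
        set k := Nat.find hex with hkdef
        have hk1 : (2:ℝ) ^ (-(k:ℝ) - 1) ≤ ‖x‖ := Nat.find_spec hex
        have hk2 : ‖x‖ < (2:ℝ) ^ (-(k:ℝ)) := by
          rcases Nat.eq_zero_or_pos k with h0 | h0
          · rw [h0]; simpa using hx1
          · obtain ⟨j, hj⟩ := Nat.exists_eq_succ_of_ne_zero h0.ne'
            have hmin := Nat.find_min hex (by omega : j < k)
            push_neg at hmin
            have : (-(j:ℝ) - 1) = -(k:ℝ) := by rw [hj]; push_cast; ring
            rw [this] at hmin
            linarith
        exact Or.inr (Set.mem_iUnion.2 ⟨k, mem_ball_zero_iff.2 hk2,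
          fun h => absurd (mem_ball_zero_iff.1 h) (not_lt.2 hk1)⟩)
    have key : ∀ k : ℕ, ∫⁻ x in S k, ENNReal.ofReal ‖‖x‖ ^ (-p)‖
        ≤ (ENNReal.ofReal ((2:ℝ) ^ p) * ENNReal.ofReal ((2:ℝ) ^ (p - (n:ℝ))) ^ k) *
          volume (ball (0:E) 1) := by
      intro k
      have hrpos : (0:ℝ) < (2:ℝ) ^ (-(k:ℝ) - 1) := Real.rpow_pos_of_pos two_pos _
      have hbd : ∀ x ∈ S k, ENNReal.ofReal ‖‖x‖ ^ (-p)‖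
          ≤ ENNReal.ofReal ((2:ℝ) ^ ((-(k:ℝ) - 1) * (-p))) := by
        intro x hxS
        have hxlb : (2:ℝ) ^ (-(k:ℝ) - 1) ≤ ‖x‖ := by
          by_contra h
          exact hxS.2 (mem_ball_zero_iff.2 (lt_of_not_ge h))
        apply ENNReal.ofReal_le_ofReal
        rw [Real.norm_eq_abs, abs_of_nonneg (Real.rpow_nonneg (norm_nonneg x) _)]
        rw [Real.rpow_mul (by norm_num : (0:ℝ) ≤ 2), Real.rpow_neg (norm_nonneg x),
          Real.rpow_neg (Real.rpow_nonneg (by norm_num) _)]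
        exact inv_anti₀ (Real.rpow_pos_of_pos hrpos p)
          (Real.rpow_le_rpow hrpos.le hxlb hp.le)
      calc ∫⁻ x in S k, ENNReal.ofReal ‖‖x‖ ^ (-p)‖
          ≤ ∫⁻ _ in S k, ENNReal.ofReal ((2:ℝ) ^ ((-(k:ℝ) - 1) * (-p))) :=
            setLIntegral_mono measurable_const hbd
        _ = ENNReal.ofReal ((2:ℝ) ^ ((-(k:ℝ) - 1) * (-p))) * volume (S k) :=
            setLIntegral_const _ _
        _ ≤ ENNReal.ofReal ((2:ℝ) ^ ((-(k:ℝ) - 1) * (-p))) *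
              volume (ball (0:E) ((2:ℝ) ^ (-(k:ℝ)))) := by
            gcongr
            exact Set.diff_subset
        _ = (ENNReal.ofReal ((2:ℝ) ^ p) * ENNReal.ofReal ((2:ℝ) ^ (p - (n:ℝ))) ^ k) *
              volume (ball (0:E) 1) := by
            rw [Measure.addHaar_ball_of_pos _ _ (Real.rpow_pos_of_pos two_pos _), ← mul_assoc]
            congr 1
            rw [finrank_euclideanSpace_fin,
              ← Real.rpow_natCast ((2:ℝ) ^ (-(k:ℝ))) n,
              ← Real.rpow_mul (by norm_num : (0:ℝ) ≤ 2),
              ← ENNReal.ofReal_mul (Real.rpow_nonneg (by norm_num) _),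
              ← ENNReal.ofReal_pow (Real.rpow_nonneg (by norm_num) _),
              ← Real.rpow_natCast ((2:ℝ) ^ (p - (n:ℝ))) k,
              ← Real.rpow_mul (by norm_num : (0:ℝ) ≤ 2),
              ← ENNReal.ofReal_mul (Real.rpow_nonneg (by norm_num) _),
              ← Real.rpow_add two_pos, ← Real.rpow_add two_pos]
            congr 1
            push_cast
            ring
    have hgeo : ENNReal.ofReal ((2:ℝ) ^ (p - (n:ℝ))) < 1 := by
      rw [← ENNReal.ofReal_one]
      exact ENNReal.ofReal_lt_ofReal_iff_of_nonneg (Real.rpow_nonneg (by norm_num) _) |>.2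
        (Real.rpow_lt_one_of_one_lt_of_neg one_lt_two (by push_cast; linarith))
    calc ∫⁻ x in ball (0:E) 1, ENNReal.ofReal ‖‖x‖ ^ (-p)‖
        ≤ ∫⁻ x in ({0} : Set E) ∪ ⋃ k, S k, ENNReal.ofReal ‖‖x‖ ^ (-p)‖ :=
          lintegral_mono_set hcover
      _ ≤ (∫⁻ x in ({0} : Set E), ENNReal.ofReal ‖‖x‖ ^ (-p)‖) +
            ∫⁻ x in ⋃ k, S k, ENNReal.ofReal ‖‖x‖ ^ (-p)‖ := lintegral_union_le _ _ _
      _ ≤ 0 + ∑' k, ∫⁻ x in S k, ENNReal.ofReal ‖‖x‖ ^ (-p)‖ := by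
          gcongr
          · rw [lintegral_singleton]
            simp [Real.zero_rpow (neg_ne_zero.2 hp.ne')]
          · exact lintegral_iUnion_le _ _
      _ ≤ 0 + ∑' k, (ENNReal.ofReal ((2:ℝ) ^ p) * ENNReal.ofReal ((2:ℝ) ^ (p - (n:ℝ))) ^ k) *
            volume (ball (0:E) 1) := by gcongr with k; exact key k
      _ < ⊤ := by
          rw [zero_add]
          have : ∑' k : ℕ, (ENNReal.ofReal ((2:ℝ) ^ p) *
                ENNReal.ofReal ((2:ℝ) ^ (p - (n:ℝ))) ^ k) * volume (ball (0:E) 1)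
              = ENNReal.ofReal ((2:ℝ) ^ p) *
                (∑' k : ℕ, ENNReal.ofReal ((2:ℝ) ^ (p - (n:ℝ))) ^ k) *
                volume (ball (0:E) 1) := by
            rw [ENNReal.tsum_mul_right, ENNReal.tsum_mul_left]
          rw [this, ENNReal.tsum_geometric]
          apply ENNReal.mul_lt_top
          · apply ENNReal.mul_lt_top ENNReal.ofReal_lt_top
            exact ENNReal.inv_lt_top.2 (tsub_pos_of_lt hgeo)
          · exact measure_ball_lt_top

lemma rB_rpow_le {n : ℕ} {x : EuclideanSpace ℝ (Fin n)} (hx : ‖x‖ < 1) {p : ℝ} (hp : 0 < p) :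
    rB n x ^ (-p) ≤ ‖x‖ ^ (-p) := by
  rcases eq_or_ne x 0 with rfl | hx0
  · simp [rB, Real.zero_rpow (neg_ne_zero.2 hp.ne')]
  · have ht : 0 < ‖x‖ := norm_pos_iff.2 hx0
    have h1t : 0 < 1 - ‖x‖ := by linarith
    have hrB : ‖x‖ ≤ rB n x := by
      rw [rB, le_div_iff₀ h1t]
      nlinarith [norm_nonneg x]
    rw [Real.rpow_neg (norm_nonneg x), Real.rpow_neg (ht.le.trans hrB)]
    exact inv_anti₀ (Real.rpow_pos_of_pos ht p) (Real.rpow_le_rpow ht.le hrB hp.le)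

lemma denom_ok {n : ℕ} (hn : 2 ≤ n) {p : ℝ} (hp1 : 1 < p) (hpn : p < n)
    (f : EuclideanSpace ℝ (Fin n) → ℝ) (hf : ContDiff ℝ (⊤ : ℕ∞) f)
    (hfc : HasCompactSupport f)
    (hfs : tsupport f ⊆ ball (0 : EuclideanSpace ℝ (Fin n)) 1) (hfne : f ≠ 0) :
    IntegrableOn (fun x => |f x| ^ p * (rB n x) ^ (-p))
      (ball (0 : EuclideanSpace ℝ (Fin n)) 1) ∧
    0 < ∫ x in ball (0 : EuclideanSpace ℝ (Fin n)) 1, |f x| ^ p * (rB n x) ^ (-p) := by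
  have hn0 : 0 < n := by omega
  have hp0 : 0 < p := by linarith
  -- bound on |f|
  obtain ⟨C, hC⟩ : ∃ C : ℝ, ∀ x, |f x| ≤ C := by
    have h := hf.continuous.norm.bddAbove_range_of_hasCompactSupport hfc.norm
    obtain ⟨C, hC⟩ := h
    exact ⟨C, fun x => by
      simpa [Real.norm_eq_abs] using hC (Set.mem_range_self (f := fun x => ‖f x‖) x)⟩
  have hC0 : 0 ≤ C := (abs_nonneg (f 0)).trans (hC 0)
  -- nonnegativity of the integrand on the ball
  have hnonneg : ∀ x : EuclideanSpace ℝ (Fin n), x ∈ ball (0:EuclideanSpace ℝ (Fin n)) 1 → 0 ≤ |f x| ^ p * (rB n x) ^ (-p) := by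
    intro x hx
    apply mul_nonneg (Real.rpow_nonneg (abs_nonneg _) _)
    apply Real.rpow_nonneg
    rw [rB]
    have := mem_ball_zero_iff.1 hx
    apply div_nonneg (norm_nonneg x) (by linarith)
  have hmeas : AEStronglyMeasurable (fun x : EuclideanSpace ℝ (Fin n) => |f x| ^ p * (rB n x) ^ (-p))
      (volume.restrict (ball (0:EuclideanSpace ℝ (Fin n)) 1)) := by
    apply Measurable.aestronglyMeasurable
    apply Measurable.mul
    · exact (hf.continuous.abs.measurable).pow measurable_const
    · exact ((measurable_norm.div (measurable_const.sub measurable_norm)).pow measurable_const)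
  have hint : IntegrableOn (fun x => |f x| ^ p * (rB n x) ^ (-p)) (ball (0:EuclideanSpace ℝ (Fin n)) 1) := by
    apply Integrable.mono' (((integrableOn_norm_rpow_ball hn0 hp0 hpn).const_mul (C ^ p)))
      hmeas
    rw [ae_restrict_iff' measurableSet_ball]
    apply ae_of_all
    intro x hx
    rw [Real.norm_eq_abs, abs_of_nonneg (hnonneg x hx)]
    apply mul_le_mul (Real.rpow_le_rpow (abs_nonneg _) (hC x) hp0.le)
      (rB_rpow_le (mem_ball_zero_iff.1 hx) hp0)
      (Real.rpow_nonneg ?_ _) (Real.rpow_nonneg hC0 _)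
    rw [rB]
    have := mem_ball_zero_iff.1 hx
    exact div_nonneg (norm_nonneg x) (by linarith)
  refine ⟨hint, ?_⟩
  rw [setIntegral_pos_iff_support_of_nonneg_ae _ hint]
  · -- find a small ball inside the support of the integrand
    obtain ⟨x₀, hx₀⟩ : ∃ x₀, f x₀ ≠ 0 := Function.ne_iff.1 hfne
    have hopen : IsOpen ({x : EuclideanSpace ℝ (Fin n) | f x ≠ 0} ∩ ball 0 1) :=
      ((isOpen_compl_singleton).preimage hf.continuous).inter isOpen_ball
    have hx₀mem : x₀ ∈ {x : EuclideanSpace ℝ (Fin n) | f x ≠ 0} ∩ ball 0 1 :=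
      ⟨hx₀, hfs (subset_tsupport f hx₀)⟩
    -- pick a point distinct from 0 in this open set
    obtain ⟨x₁, hx₁mem, hx₁0⟩ : ∃ x₁, x₁ ∈ {x : EuclideanSpace ℝ (Fin n) | f x ≠ 0} ∩ ball 0 1 ∧ x₁ ≠ 0 := by
      rcases eq_or_ne x₀ 0 with rfl | h0
      · obtain ⟨ρ, hρ, hball⟩ := Metric.isOpen_iff.1 hopen 0 hx₀mem
        set e : EuclideanSpace ℝ (Fin n) := EuclideanSpace.single (⟨0, hn0⟩ : Fin n) (1:ℝ) with he
        have hne : ‖e‖ = 1 := by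
          rw [he, EuclideanSpace.norm_single]; norm_num
        refine ⟨(ρ/2) • e, hball ?_, ?_⟩
        · rw [mem_ball_zero_iff, norm_smul, hne]
          rw [Real.norm_eq_abs, abs_of_pos (by linarith)]
          linarith
        · intro h
          have : ‖(ρ/2) • e‖ = 0 := by rw [h, norm_zero]
          rw [norm_smul, hne, Real.norm_eq_abs, abs_of_pos (by linarith)] at this
          linarith
      · exact ⟨x₀, hx₀mem, h0⟩
    have hopen' : IsOpen (({x : EuclideanSpace ℝ (Fin n) | f x ≠ 0} ∩ ball 0 1) ∩ {(0:EuclideanSpace ℝ (Fin n))}ᶜ) :=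
      hopen.inter (isOpen_compl_singleton)
    obtain ⟨ρ, hρ, hball⟩ := Metric.isOpen_iff.1 hopen' x₁ ⟨hx₁mem, hx₁0⟩
    have hsub : ball x₁ ρ ⊆
        Function.support (fun x => |f x| ^ p * (rB n x) ^ (-p)) ∩ ball (0:EuclideanSpace ℝ (Fin n)) 1 := by
      intro z hz
      obtain ⟨⟨hz1, hz2⟩, hz3⟩ := hball hz
      have hz0 : (0:ℝ) < ‖z‖ := norm_pos_iff.2 hz3
      have hz4 : ‖z‖ < 1 := mem_ball_zero_iff.1 hz2
      refine ⟨?_, hz2⟩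
      have h1 : 0 < |f z| ^ p := Real.rpow_pos_of_pos (abs_pos.2 hz1) p
      have h2 : 0 < (rB n z) ^ (-p) := by
        apply Real.rpow_pos_of_pos
        rw [rB]
        exact div_pos hz0 (by linarith)
      exact (mul_pos h1 h2).ne'
    calc (0:ℝ≥0∞) < volume (ball x₁ ρ) := measure_ball_pos volume x₁ hρ
      _ ≤ volume (Function.support (fun x => |f x| ^ p * (rB n x) ^ (-p)) ∩ ball (0:EuclideanSpace ℝ (Fin n)) 1) :=
        measure_mono hsub
  · rw [EventuallyLE, ae_restrict_iff' measurableSet_ball]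
    apply ae_of_all
    intro x hx
    exact hnonneg x hx

lemma expNegInvGlue_mono : Monotone expNegInvGlue := by
  intro a b hab
  rcases le_or_gt b 0 with hb | hb
  · rw [expNegInvGlue.zero_of_nonpos hb, expNegInvGlue.zero_of_nonpos (hab.trans hb)]
  rcases le_or_gt a 0 with ha | ha
  · rw [expNegInvGlue.zero_of_nonpos ha]
    exact expNegInvGlue.nonneg b
  · rw [expNegInvGlue, expNegInvGlue, if_neg (not_le.2 ha), if_neg (not_le.2 hb)]
    apply Real.exp_le_exp.2
    have := inv_anti₀ ha hab
    linarith

lemma smoothTransition_mono : Monotone Real.smoothTransition := by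
  intro a b hab
  unfold Real.smoothTransition
  rw [div_le_div_iff₀ (Real.smoothTransition.pos_denom a) (Real.smoothTransition.pos_denom b)]
  have h1 : expNegInvGlue a ≤ expNegInvGlue b := expNegInvGlue_mono hab
  have h2 : expNegInvGlue (1 - b) ≤ expNegInvGlue (1 - a) := expNegInvGlue_mono (by linarith)
  have h3 := expNegInvGlue.nonneg a
  have h4 := expNegInvGlue.nonneg (1 - b)
  nlinarith [mul_le_mul h1 h2 h4 (expNegInvGlue.nonneg b)]

lemma smoothTransition_deriv_nonneg (s : ℝ) : 0 ≤ deriv Real.smoothTransition s := by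
  have hd : HasDerivAt Real.smoothTransition (deriv Real.smoothTransition s) s :=
    ((Real.smoothTransition.contDiff (n := (1:ℕ∞))).differentiable (by simp) s).hasDerivAt
  have := hasDerivAt_iff_tendsto_slope.1 hd
  refine ge_of_tendsto this ?_
  apply Filter.Eventually.of_forall
  intro y
  rw [slope_def_field]
  rcases lt_trichotomy y s with h | h | h
  · have hnum : Real.smoothTransition y ≤ Real.smoothTransition s := smoothTransition_mono h.le
    have : y - s < 0 := by linarith
    exact div_nonneg_of_nonpos (by linarith) this.le
  · simp [h]
  · have hnum : Real.smoothTransition s ≤ Real.smoothTransition y := smoothTransition_mono h.le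
    apply div_nonneg (by linarith) (by linarith)

lemma smoothTransition_deriv_zero {s : ℝ} (hs : s ∉ Set.Icc (0:ℝ) 1) :
    deriv Real.smoothTransition s = 0 := by
  rw [Set.mem_Icc, not_and_or, not_le, not_le] at hs
  rcases hs with h | h
  · have heq : Real.smoothTransition =ᶠ[nhds s] fun _ => (0:ℝ) := by
      filter_upwards [Iio_mem_nhds h] with t ht
      exact Real.smoothTransition.zero_of_nonpos (le_of_lt ht)
    rw [heq.deriv_eq, deriv_const]
  · have heq : Real.smoothTransition =ᶠ[nhds s] fun _ => (1:ℝ) := by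
      filter_upwards [Ioi_mem_nhds h] with t ht
      exact Real.smoothTransition.one_of_one_le (le_of_lt ht)
    rw [heq.deriv_eq, deriv_const]

lemma smoothTransition_deriv_bound : ∃ K : ℝ, 1 ≤ K ∧ ∀ s, deriv Real.smoothTransition s ≤ K := by
  obtain ⟨C, hC⟩ := (isCompact_Icc (a := (0:ℝ)) (b := 1)).exists_bound_of_continuousOn
    ((Real.smoothTransition.contDiff (n := (1:ℕ∞))).continuous_deriv le_rfl).continuousOn
  refine ⟨max C 1, le_max_right _ _, fun s => ?_⟩
  by_cases hs : s ∈ Set.Icc (0:ℝ) 1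
  · have := hC s hs
    rw [Real.norm_eq_abs] at this
    exact (le_abs_self _).trans (this.trans (le_max_left _ _))
  · rw [smoothTransition_deriv_zero hs]
    linarith [le_max_right C 1]

lemma testfun_gradient {n : ℕ} {δ : ℝ} (hδ : 0 < δ) (x : EuclideanSpace ℝ (Fin n)) :
    HasGradientAt (fun y : EuclideanSpace ℝ (Fin n) =>
        -(Real.smoothTransition ((1 - ‖y‖ ^ 2) / δ - 1)))
      ((2 * deriv Real.smoothTransition ((1 - ‖x‖ ^ 2) / δ - 1) / δ) • x) x := by
  set χ := Real.smoothTransition with hχ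
  set u : ℝ := (1 - ‖x‖ ^ 2) / δ - 1 with hu
  have hw : HasFDerivAt (fun y : EuclideanSpace ℝ (Fin n) => ‖y‖ ^ 2)
      ((2:ℕ) • (innerSL ℝ x)) x := (hasStrictFDerivAt_norm_sq x).hasFDerivAt
  have hφ : HasDerivAt (fun s : ℝ => -(χ ((1 - s) / δ - 1))) (deriv χ u / δ) (‖x‖ ^ 2) := by
    have h1 : HasDerivAt (fun s : ℝ => (1 - s) / δ - 1) (-1 / δ) (‖x‖ ^ 2) :=
      (((hasDerivAt_id (‖x‖ ^ 2)).const_sub 1).div_const δ).sub_const 1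
    have h2 : HasDerivAt χ (deriv χ u) u :=
      ((Real.smoothTransition.contDiff (n := (1:ℕ∞))).differentiable (by simp) u).hasDerivAt
    have h3 := (h2.comp (‖x‖ ^ 2) h1).neg
    exact h3.congr_deriv (by ring)
  have h4 := hφ.comp_hasFDerivAt x hw
  rw [hasGradientAt_iff_hasFDerivAt]
  refine h4.congr_fderiv ?_
  refine ContinuousLinearMap.ext fun z => ?_
  rw [InnerProductSpace.toDual_apply_apply]
  simp only [ContinuousLinearMap.smul_apply, ContinuousLinearMap.smul_apply, innerSL_apply_apply,
    smul_eq_mul]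
  rw [real_inner_smul_left]
  ring


set_option maxHeartbeats 1000000 in
/-- The `L^p`-Hardy inequality fails on Berwald's metric space: for `1 < p < n`, the
infimum over nonzero smooth compactly supported `f` of
`(∫ B*(x,df)^p dx) / (∫ |f|^p r^{-p} dx)` is `0` (and for every such nonzero `f`
the denominator is finite and positive). -/
theorem berwald_hardy_fails (n : ℕ) (hn : 2 ≤ n) (p : ℝ) (hp1 : 1 < p) (hpn : p < n) :
    (∀ f : EuclideanSpace ℝ (Fin n) → ℝ, ContDiff ℝ (⊤ : ℕ∞) f → HasCompactSupport f →
      tsupport f ⊆ ball (0 : EuclideanSpace ℝ (Fin n)) 1 → f ≠ 0 →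
      IntegrableOn (fun x => |f x| ^ p * (rB n x) ^ (-p))
        (ball (0 : EuclideanSpace ℝ (Fin n)) 1) ∧
      0 < ∫ x in ball (0 : EuclideanSpace ℝ (Fin n)) 1, |f x| ^ p * (rB n x) ^ (-p)) ∧
    ∀ ε : ℝ, 0 < ε →
      ∃ f : EuclideanSpace ℝ (Fin n) → ℝ, ContDiff ℝ (⊤ : ℕ∞) f ∧ HasCompactSupport f ∧
        tsupport f ⊆ ball (0 : EuclideanSpace ℝ (Fin n)) 1 ∧ f ≠ 0 ∧
        (∫ x in ball (0 : EuclideanSpace ℝ (Fin n)) 1, (berwaldCo n x (gradient f x)) ^ p) ≤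
          ε * ∫ x in ball (0 : EuclideanSpace ℝ (Fin n)) 1, |f x| ^ p * (rB n x) ^ (-p) := by
  have hn0 : 0 < n := by omega
  have hp0 : (0:ℝ) < p := by linarith
  constructor
  · intro f hf hfc hfs hfne
    exact denom_ok hn hp1 hpn f hf hfc hfs hfne
  intro ε hε
  obtain ⟨K, hK1, hK⟩ := smoothTransition_deriv_bound
  have hKpos : (0:ℝ) < K := lt_of_lt_of_le one_pos hK1
  set V : ℝ := (volume (ball (0 : EuclideanSpace ℝ (Fin n)) 1)).toReal with hVdef
  have hVpos : 0 < V := ENNReal.toReal_pos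
    (measure_ball_pos volume 0 one_pos).ne' measure_ball_lt_top.ne
  set A : Set (EuclideanSpace ℝ (Fin n)) := closedBall 0 (3/4) \ ball 0 (1/2) with hAdef
  have hAmeas : MeasurableSet A := measurableSet_closedBall.diff measurableSet_ball
  have hAsub : A ⊆ ball (0 : EuclideanSpace ℝ (Fin n)) 1 := by
    intro x hx
    have h1 : ‖x‖ ≤ 3/4 := mem_closedBall_zero_iff.1 hx.1
    rw [mem_ball_zero_iff]; linarith
  have hAvolpos : 0 < (volume A).toReal := by
    have hne : Nonempty (Fin n) := ⟨⟨0, hn0⟩⟩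
    set e : EuclideanSpace ℝ (Fin n) := EuclideanSpace.single (⟨0, hn0⟩ : Fin n) (1:ℝ) with he
    have hne1 : ‖e‖ = 1 := by rw [he, EuclideanSpace.norm_single]; norm_num
    set x₂ : EuclideanSpace ℝ (Fin n) := (5/8 : ℝ) • e with hx₂
    have hx₂n : ‖x₂‖ = 5/8 := by
      rw [hx₂, norm_smul, hne1, Real.norm_eq_abs, abs_of_pos (by norm_num)]; ring
    have hsub : ball x₂ (1/16) ⊆ A := by
      intro y hy
      have hdist : ‖y - x₂‖ < 1/16 := by
        rw [← dist_eq_norm]; exact mem_ball.1 hy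
      have hyx : x₂ + (y - x₂) = y := by abel
      have h1 : ‖y‖ ≤ ‖x₂‖ + ‖y - x₂‖ := by
        calc ‖y‖ = ‖x₂ + (y - x₂)‖ := by rw [hyx]
          _ ≤ ‖x₂‖ + ‖y - x₂‖ := norm_add_le _ _
      have h2 : ‖x₂‖ - ‖y - x₂‖ ≤ ‖y‖ := by
        have := norm_sub_norm_le x₂ y
        have h3 : ‖x₂ - y‖ = ‖y - x₂‖ := norm_sub_rev _ _
        linarith [abs_le.1 (abs_norm_sub_norm_le x₂ y)]
      constructor
      · rw [mem_closedBall_zero_iff]; rw [hx₂n] at h1; linarith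
      · intro hmem
        have := mem_ball_zero_iff.1 hmem
        rw [hx₂n] at h2; linarith
    refine ENNReal.toReal_pos ?_ ?_
    · exact ((measure_ball_pos volume x₂ (by norm_num)).trans_le (measure_mono hsub)).ne'
    · exact ((measure_mono Set.diff_subset).trans_lt measure_closedBall_lt_top).ne
  set c₀ : ℝ := (3:ℝ) ^ (-p) * (volume A).toReal with hc₀def
  have hc₀pos : 0 < c₀ := mul_pos (Real.rpow_pos_of_pos (by norm_num) _) hAvolpos
  set δ : ℝ := min (1/5) (min (1/(8*K)) (ε * c₀ / (8*K*V))) with hδdef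
  have hδpos : 0 < δ := by
    apply lt_min (by norm_num)
    apply lt_min (by positivity) (by positivity)
  have hδ15 : δ ≤ 1/5 := min_le_left _ _
  have h8K1 : 8*K*δ ≤ 1 := by
    have hδle : δ ≤ 1/(8*K) := le_trans (min_le_right _ _) (min_le_left _ _)
    calc 8*K*δ ≤ 8*K*(1/(8*K)) := by
          apply mul_le_mul_of_nonneg_left hδle (by positivity)
      _ = 1 := by field_simp
  have h8K2 : 8*K*δ ≤ ε*c₀/V := by
    have hδle : δ ≤ ε * c₀ / (8*K*V) := le_trans (min_le_right _ _) (min_le_right _ _)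
    calc 8*K*δ ≤ 8*K*(ε * c₀ / (8*K*V)) := by
          apply mul_le_mul_of_nonneg_left hδle (by positivity)
      _ = ε*c₀/V := by field_simp
  set f : EuclideanSpace ℝ (Fin n) → ℝ :=
    fun x => -(Real.smoothTransition ((1 - ‖x‖ ^ 2) / δ - 1)) with hfdef
  have hfval : ∀ x : EuclideanSpace ℝ (Fin n),
      f x = -(Real.smoothTransition ((1 - ‖x‖ ^ 2) / δ - 1)) := fun _ => rfl
  have hfC : ContDiff ℝ (⊤ : ℕ∞) f := by
    apply ContDiff.neg
    apply Real.smoothTransition.contDiff.comp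
    exact ((contDiff_const.sub (contDiff_norm_sq ℝ)).div_const δ).sub contDiff_const
  have hsupp : ∀ x : EuclideanSpace ℝ (Fin n), f x ≠ 0 → ‖x‖ ^ 2 ≤ 1 - δ := by
    intro x hx
    rw [hfval x] at hx
    simp only [neg_ne_zero] at hx
    have hgt : 0 < (1 - ‖x‖ ^ 2) / δ - 1 := by
      by_contra h
      exact hx (Real.smoothTransition.zero_of_nonpos (not_lt.1 h))
    rw [sub_pos, lt_div_iff₀ hδpos, one_mul] at hgt
    linarith
  have hfc : HasCompactSupport f := by
    apply HasCompactSupport.intro (isCompact_closedBall (0 : EuclideanSpace ℝ (Fin n)) 1)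
    intro x hx
    have h1 : 1 < ‖x‖ := by
      by_contra h
      exact hx (mem_closedBall_zero_iff.2 (not_lt.1 h))
    by_contra h
    have := hsupp x h
    nlinarith
  have hfs : tsupport f ⊆ ball (0 : EuclideanSpace ℝ (Fin n)) 1 := by
    have hclosed : IsClosed {x : EuclideanSpace ℝ (Fin n) | ‖x‖ ^ 2 ≤ 1 - δ} :=
      IsClosed.preimage (continuous_norm.pow 2) isClosed_Iic
    have h1 : tsupport f ⊆ {x : EuclideanSpace ℝ (Fin n) | ‖x‖ ^ 2 ≤ 1 - δ} :=
      closure_minimal (fun x hx => hsupp x hx) hclosed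
    intro x hx
    have h2 : ‖x‖ ^ 2 ≤ 1 - δ := h1 hx
    rw [mem_ball_zero_iff]
    nlinarith [norm_nonneg x, hδpos]
  have hfne : f ≠ 0 := by
    intro h
    have h0 := congrFun h 0
    have harg : (1:ℝ) ≤ (1 - ‖(0 : EuclideanSpace ℝ (Fin n))‖ ^ 2) / δ - 1 := by
      rw [norm_zero]
      rw [le_sub_iff_add_le, le_div_iff₀ hδpos]
      norm_num
      linarith
    rw [hfval 0, Real.smoothTransition.one_of_one_le harg, Pi.zero_apply] at h0
    norm_num at h0
  -- denominator facts
  obtain ⟨hIint, hIpos⟩ := denom_ok hn hp1 hpn f hfC hfc hfs hfne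
  set I : ℝ := ∫ x in ball (0 : EuclideanSpace ℝ (Fin n)) 1, |f x| ^ p * (rB n x) ^ (-p)
    with hIdef
  -- lower bound for the denominator
  have hfA : ∀ x ∈ A, f x = -1 := by
    intro x hx
    have h1 : ‖x‖ ≤ 3/4 := mem_closedBall_zero_iff.1 hx.1
    have h2 : ‖x‖ ^ 2 ≤ 9/16 := by nlinarith [norm_nonneg x]
    have harg : (1:ℝ) ≤ (1 - ‖x‖ ^ 2) / δ - 1 := by
      rw [le_sub_iff_add_le, le_div_iff₀ hδpos]
      linarith
    rw [hfdef]
    simp only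
    rw [Real.smoothTransition.one_of_one_le harg]
  have hIlow : c₀ ≤ I := by
    have hstep : ∀ x ∈ A, (3:ℝ) ^ (-p) ≤ |f x| ^ p * (rB n x) ^ (-p) := by
      intro x hx
      have h1 : ‖x‖ ≤ 3/4 := mem_closedBall_zero_iff.1 hx.1
      have h2 : 1/2 ≤ ‖x‖ := by
        by_contra h
        exact hx.2 (mem_ball_zero_iff.2 (not_le.1 h))
      have hfx : |f x| = 1 := by rw [hfA x hx]; norm_num
      have hrBpos : 0 < rB n x := by
        rw [rB]; apply div_pos (by linarith) (by linarith)
      have hrB3 : rB n x ≤ 3 := by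
        rw [rB, div_le_iff₀ (by linarith)]; linarith
      have hrpow : (3:ℝ) ^ (-p) ≤ (rB n x) ^ (-p) := by
        rw [Real.rpow_neg (by norm_num), Real.rpow_neg hrBpos.le]
        exact inv_anti₀ (Real.rpow_pos_of_pos hrBpos p)
          (Real.rpow_le_rpow hrBpos.le hrB3 hp0.le)
      calc (3:ℝ) ^ (-p) ≤ (rB n x) ^ (-p) := hrpow
        _ = |f x| ^ p * (rB n x) ^ (-p) := by rw [hfx, Real.one_rpow, one_mul]
    have hnnA : (0 : EuclideanSpace ℝ (Fin n) → ℝ)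
        ≤ᵐ[volume.restrict (ball (0 : EuclideanSpace ℝ (Fin n)) 1)]
        fun x => |f x| ^ p * (rB n x) ^ (-p) := by
      rw [EventuallyLE, ae_restrict_iff' measurableSet_ball]
      apply ae_of_all
      intro x hx
      have hmem := mem_ball_zero_iff.1 hx
      apply mul_nonneg (Real.rpow_nonneg (abs_nonneg _) _)
      apply Real.rpow_nonneg
      rw [rB]
      exact div_nonneg (norm_nonneg x) (by linarith)
    calc c₀ = (3:ℝ) ^ (-p) * (volume A).toReal := hc₀def
      _ = ∫ _ in A, (3:ℝ) ^ (-p) := by rw [setIntegral_const, smul_eq_mul, mul_comm]; rfl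
      _ ≤ ∫ x in A, |f x| ^ p * (rB n x) ^ (-p) := by
          apply setIntegral_mono_on (integrableOn_const ?_) (hIint.mono_set hAsub)
            hAmeas hstep
          exact ((measure_mono hAsub).trans_lt measure_ball_lt_top).ne
      _ ≤ I := setIntegral_mono_set hIint hnnA (HasSubset.Subset.eventuallyLE hAsub)
  -- pointwise bound on the co-metric of the gradient
  have hgrad : ∀ x : EuclideanSpace ℝ (Fin n),
      gradient f x = (2 * deriv Real.smoothTransition ((1 - ‖x‖ ^ 2) / δ - 1) / δ) • x :=
    fun x => (testfun_gradient hδpos x).gradient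
  have hpoint : ∀ x ∈ ball (0 : EuclideanSpace ℝ (Fin n)) 1,
      (berwaldCo n x (gradient f x)) ^ p ≤ (8*K*δ) ^ p := by
    intro x hx
    have hxn : ‖x‖ < 1 := mem_ball_zero_iff.1 hx
    set d : ℝ := deriv Real.smoothTransition ((1 - ‖x‖ ^ 2) / δ - 1) with hd
    have hd0 : 0 ≤ d := smoothTransition_deriv_nonneg _
    have hdK : d ≤ K := hK _
    have hc : (0:ℝ) ≤ 2 * d / δ := by positivity
    rw [hgrad x]
    apply Real.rpow_le_rpow (berwaldCo_nonneg hn0 hxn hc) _ hp0.le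
    refine (berwaldCo_le hn0 hxn hc).trans ?_
    rcases eq_or_ne d 0 with hzero | hdne
    · rw [hzero]
      simp only [mul_zero, zero_div, zero_mul]
      positivity
    · have hmem : (1 - ‖x‖ ^ 2) / δ - 1 ∈ Set.Icc (0:ℝ) 1 := by
        by_contra h
        exact hdne (smoothTransition_deriv_zero h)
      obtain ⟨hm1, hm2⟩ := hmem
      have hδ1 : δ ≤ 1 - ‖x‖ ^ 2 := by
        rw [sub_nonneg, le_div_iff₀ hδpos, one_mul] at hm1
        linarith
      have hδ2 : 1 - ‖x‖ ^ 2 ≤ 2*δ := by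
        rw [sub_le_iff_le_add, div_le_iff₀ hδpos] at hm2
        linarith
      have ht0 : (0:ℝ) ≤ ‖x‖ := norm_nonneg x
      have ht2 : 1 - ‖x‖ ≤ 1 - ‖x‖ ^ 2 := by nlinarith
      have hsq : (1 - ‖x‖) ^ 2 ≤ 4 * δ ^ 2 := by nlinarith
      rw [div_mul_eq_mul_div, div_le_iff₀ hδpos]
      have h5 : ‖x‖ * (1 - ‖x‖) ^ 2 ≤ 4 * δ ^ 2 := by
        calc ‖x‖ * (1 - ‖x‖) ^ 2 ≤ 1 * (1 - ‖x‖) ^ 2 := by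
              apply mul_le_mul_of_nonneg_right hxn.le (sq_nonneg _)
          _ ≤ 4 * δ ^ 2 := by rw [one_mul]; exact hsq
      have h6 : d * (‖x‖ * (1 - ‖x‖) ^ 2) ≤ K * (4 * δ ^ 2) :=
        mul_le_mul hdK h5 (by positivity) (by linarith)
      nlinarith
  -- conclusion
  refine ⟨f, hfC, hfc, hfs, hfne, ?_⟩
  by_cases hLHS : IntegrableOn
      (fun x => (berwaldCo n x (gradient f x)) ^ p)
      (ball (0 : EuclideanSpace ℝ (Fin n)) 1) volume
  · have hconst : IntegrableOn (fun _ : EuclideanSpace ℝ (Fin n) => (8*K*δ) ^ p)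
        (ball (0 : EuclideanSpace ℝ (Fin n)) 1) volume :=
      integrableOn_const measure_ball_lt_top.ne
    have h8pos : (0:ℝ) < 8*K*δ := by positivity
    calc ∫ x in ball (0 : EuclideanSpace ℝ (Fin n)) 1, (berwaldCo n x (gradient f x)) ^ p
        ≤ ∫ _ in ball (0 : EuclideanSpace ℝ (Fin n)) 1, (8*K*δ) ^ p :=
          setIntegral_mono_on hLHS hconst measurableSet_ball hpoint
      _ = (8*K*δ) ^ p * V := by rw [setIntegral_const, smul_eq_mul, mul_comm]; rfl
      _ ≤ (8*K*δ) * V := by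
          apply mul_le_mul_of_nonneg_right _ hVpos.le
          have := Real.rpow_le_rpow_of_exponent_ge h8pos h8K1 hp1.le
          rwa [Real.rpow_one] at this
      _ ≤ (ε*c₀/V) * V := mul_le_mul_of_nonneg_right h8K2 hVpos.le
      _ = ε * c₀ := by field_simp
      _ ≤ ε * I := mul_le_mul_of_nonneg_left hIlow hε.le
  · rw [integral_undef hLHS]
    exact mul_nonneg hε.le (le_of_lt hIpos)
end
end
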